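/- arXiv:2603.25191 — 6 statements merged into one kernel-verified Lean document; each statement's English description precedes it below -/
import Mathlib

section
/- Let k ≥ 2 and let G = C_m □ P_n with m ≥ 3 and n ≥ 1. The following statements are equivalent: (1) G admits an efficient dominating set; (2) there exists a [k]-Roman dominating function f : V(G) → {0,1,...,k+1} such that Σ_{u∈N[v]} f(u) = k+1 for every vertex v of G; (3) either n = 1 and m ≡ 0 (mod 3), or n = 2 and m ≡ 0 (mod 4). -/
open scoped Classical

/-- The cylindrical grid `C_m □ P_n`: the Cartesian (box) product of the
cycle on `m` vertices with the path on `n` vertices. -/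
def cylinder (m n : ℕ) : SimpleGraph (Fin m × Fin n) :=
  (SimpleGraph.cycleGraph m).boxProd (SimpleGraph.pathGraph n)

/-- Sum of `f` over the closed neighborhood of `v`. -/
noncomputable def nbhdSum {V : Type*} [Fintype V] (G : SimpleGraph V) (f : V → ℕ) (v : V) : ℕ :=
  ∑ u ∈ Finset.univ.filter (fun u => G.Adj v u ∨ u = v), f u

/-- The number of active neighbors of `v`, i.e. neighbors with positive label. -/
noncomputable def anCard {V : Type*} [Fintype V] (G : SimpleGraph V) (f : V → ℕ) (v : V) : ℕ :=
  (Finset.univ.filter (fun u => G.Adj v u ∧ 0 < f u)).card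

/-- `f : V → {0,…,k+1}` is a `[k]`-Roman dominating function on `G`. -/
def IsKRDF {V : Type*} [Fintype V] (k : ℕ) (G : SimpleGraph V) (f : V → ℕ) : Prop :=
  (∀ v, f v ≤ k + 1) ∧ ∀ v, f v < k → k + anCard G f v ≤ nbhdSum G f v

/-- The `[k]`-Roman domination number: the minimum weight of a `[k]`-RDF. -/
noncomputable def gammaKR {V : Type*} [Fintype V] (k : ℕ) (G : SimpleGraph V) : ℕ :=
  sInf {w | ∃ f : V → ℕ, IsKRDF k G f ∧ w = ∑ v, f v}

/-- `D` is an efficient dominating set: every vertex lies in the closed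
neighborhood of exactly one vertex of `D`. -/
def IsEfficientDominating {V : Type*} (G : SimpleGraph V) (D : Set V) : Prop :=
  ∀ v, ∃! u, u ∈ D ∧ (G.Adj u v ∨ u = v)

open Fin.CommRing

section C
variable {V : Type*} [Fintype V] {G : SimpleGraph V} {k : ℕ}

lemma nbhdSum_split (f : V → ℕ) (v : V) :
    nbhdSum G f v = f v + ∑ u ∈ Finset.univ.filter (fun u => G.Adj v u), f u := by
  rw [nbhdSum]
  have h : (Finset.univ.filter (fun u => G.Adj v u ∨ u = v)) =
      insert v (Finset.univ.filter (fun u => G.Adj v u)) := by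
    ext w
    simp only [Finset.mem_filter, Finset.mem_insert, Finset.mem_univ, true_and]
    constructor
    · rintro (h | h)
      exacts [Or.inr h, Or.inl h]
    · rintro (h | h)
      · subst h; exact Or.inr rfl
      · exact Or.inl h
  rw [h, Finset.sum_insert (by simp)]

lemma eds_to_f (hk : 2 ≤ k) (D : Set V) (hD : IsEfficientDominating G D) :
    ∃ f : V → ℕ, IsKRDF k G f ∧ ∀ v, nbhdSum G f v = k + 1 := by
  classical
  set fD : V → ℕ := fun v => if v ∈ D then k + 1 else 0 with hfD
  have hsum : ∀ v, nbhdSum G fD v = k + 1 := by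
    intro v
    obtain ⟨u0, ⟨hu0D, hu0N⟩, huni⟩ := hD v
    have hcard : ((Finset.univ.filter (fun u => G.Adj v u ∨ u = v)).filter (· ∈ D)).card = 1 := by
      rw [Finset.card_eq_one]
      refine ⟨u0, ?_⟩
      ext w
      simp only [Finset.mem_filter, Finset.mem_univ, true_and, Finset.mem_singleton]
      constructor
      · rintro ⟨hw, hwD⟩
        refine huni w ⟨hwD, ?_⟩
        rcases hw with hw | hw
        · exact Or.inl hw.symm
        · exact Or.inr hw
      · rintro rfl
        refine ⟨?_, hu0D⟩
        rcases hu0N with h | h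
        · exact Or.inl h.symm
        · exact Or.inr h
    rw [nbhdSum, ← Finset.sum_filter (fun u => u ∈ D) (fun _ => k + 1)]
    rw [Finset.sum_const, hcard, one_smul]
  refine ⟨fD, ⟨fun v => by by_cases h : v ∈ D <;> simp [fD, h], ?_⟩, hsum⟩
  intro v hv
  have hvD : v ∉ D := by intro h; simp only [fD, if_pos h] at hv; omega
  obtain ⟨u0, ⟨hu0D, hu0N⟩, huni⟩ := hD v
  have hu0v : u0 ≠ v := by rintro rfl; exact hvD hu0D
  have hadj : G.Adj v u0 := ((hu0N.resolve_right hu0v)).symm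
  have han : anCard G fD v = 1 := by
    rw [anCard, Finset.card_eq_one]
    refine ⟨u0, ?_⟩
    ext w
    simp only [Finset.mem_filter, Finset.mem_univ, true_and, Finset.mem_singleton]
    constructor
    · rintro ⟨hw, hwpos⟩
      have hwD : w ∈ D := by
        by_contra h
        simp only [fD, if_neg h] at hwpos; omega
      exact huni w ⟨hwD, Or.inl hw.symm⟩
    · rintro rfl
      exact ⟨hadj, by simp only [fD, if_pos hu0D]; omega⟩
  rw [han, hsum v]

end C

section C2
variable {V : Type*} [Fintype V] {G : SimpleGraph V} {k : ℕ}

lemma f_to_eds (hk : 2 ≤ k) (hdeg : ∀ u w : V, ∃ x, G.Adj u x ∧ x ≠ w)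
    (f : V → ℕ) (hf : IsKRDF k G f) (hsum : ∀ v, nbhdSum G f v = k + 1) :
    ∃ D : Set V, IsEfficientDominating G D := by
  classical
  have hsplit : ∀ v, f v + ∑ u ∈ Finset.univ.filter (fun u => G.Adj v u), f u = k + 1 := by
    intro v
    rw [← nbhdSum_split, hsum]
  have keyclaim : ∀ u, 0 < f u → f u = k + 1 := by
    intro u hu
    by_contra hne
    have hle : f u ≤ k := by have := hf.1 u; omega
    have hS := hsplit u
    have hex : ∃ w ∈ Finset.univ.filter (fun x => G.Adj u x), 0 < f w := by
      by_contra h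
      push_neg at h
      have hz : ∑ x ∈ Finset.univ.filter (fun x => G.Adj u x), f x = 0 :=
        Finset.sum_eq_zero (fun x hx => by have := h x hx; omega)
      omega
    obtain ⟨w, hwmem, hwpos⟩ := hex
    have hwadj : G.Adj u w := (Finset.mem_filter.mp hwmem).2
    have hzero : ∀ x ∈ Finset.univ.filter (fun x => G.Adj u x), x ≠ w → f x = 0 := by
      by_cases hcase : f u < k
      · have h1 := hf.2 u hcase
        rw [hsum u] at h1
        intro x hx hxw
        by_contra hxpos
        have hxpos' : 0 < f x := by omega
        have hxadj : G.Adj u x := (Finset.mem_filter.mp hx).2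
        have hcard : anCard G f u ≤ 1 := by omega
        rw [anCard] at hcard
        have := Finset.card_le_one.mp hcard x (by simp [hxadj, hxpos']) w (by simp [hwadj, hwpos])
        exact hxw this
      · have hfu : f u = k := by omega
        intro x hx hxw
        have h2 := Finset.add_sum_erase _ f hwmem
        have hx' : x ∈ (Finset.univ.filter (fun x => G.Adj u x)).erase w :=
          Finset.mem_erase.mpr ⟨hxw, hx⟩
        have h3 : f x ≤ ∑ y ∈ (Finset.univ.filter (fun x => G.Adj u x)).erase w, f y :=
          Finset.single_le_sum (fun _ _ => Nat.zero_le _) hx'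
        omega
    obtain ⟨x, hxadj, hxw⟩ := hdeg u w
    have hxmem : x ∈ Finset.univ.filter (fun y => G.Adj u y) := by simp [hxadj]
    have hfx : f x = 0 := hzero x hxmem hxw
    have h3 := hf.2 x (by omega)
    rw [hsum x] at h3
    have honly : ∀ y ∈ Finset.univ.filter (fun y => G.Adj x y), y ≠ u → f y = 0 := by
      intro y hy hyu
      by_contra hypos
      have hypos' : 0 < f y := by omega
      have hyadj : G.Adj x y := (Finset.mem_filter.mp hy).2
      have hcard : anCard G f x ≤ 1 := by omega
      rw [anCard] at hcard
      have := Finset.card_le_one.mp hcard y (by simp [hyadj, hypos']) u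
        (by simp [hxadj.symm, hu])
      exact hyu this
    have hfinal : nbhdSum G f x = f u := by
      rw [nbhdSum_split, hfx, zero_add]
      exact Finset.sum_eq_single_of_mem u (by simp [hxadj.symm]) honly
    rw [hsum x] at hfinal
    omega
  refine ⟨{v | 0 < f v}, fun v => ?_⟩
  have hex : ∃ u ∈ Finset.univ.filter (fun u => G.Adj v u ∨ u = v), 0 < f u := by
    by_contra h
    push_neg at h
    have hz : nbhdSum G f v = 0 :=
      Finset.sum_eq_zero (fun x hx => by have := h x hx; omega)
    rw [hsum v] at hz
    omega
  obtain ⟨u, humem, hupos⟩ := hex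
  have hucond : G.Adj v u ∨ u = v := (Finset.mem_filter.mp humem).2
  have huc : G.Adj u v ∨ u = v := by
    rcases hucond with h | h
    · exact Or.inl h.symm
    · exact Or.inr h
  refine ⟨u, ⟨hupos, huc⟩, ?_⟩
  rintro y ⟨hypos, hycond⟩
  by_contra hyu
  have hymem : y ∈ Finset.univ.filter (fun u => G.Adj v u ∨ u = v) := by
    rcases hycond with h | h
    · simp [h.symm]
    · simp [h]
  have hfu : f u = k + 1 := keyclaim u hupos
  have hfy : f y = k + 1 := keyclaim y hypos
  have h2 := Finset.add_sum_erase _ f humem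
  have hy' : y ∈ (Finset.univ.filter (fun u => G.Adj v u ∨ u = v)).erase u :=
    Finset.mem_erase.mpr ⟨hyu, hymem⟩
  have h3 : f y ≤ ∑ z ∈ (Finset.univ.filter (fun u => G.Adj v u ∨ u = v)).erase u, f z :=
    Finset.single_le_sum (fun _ _ => Nat.zero_le _) hy'
  have h4 := hsum v
  rw [nbhdSum] at h4
  omega

end C2

section A
variable {m n : ℕ} [NeZero m]

lemma val_one_of (hm : 3 ≤ m) : ((1 : Fin m) : ℕ) = 1 := by
  rw [Fin.val_one']; exact Nat.mod_eq_of_lt (by omega)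

lemma cyc_adj (hm : 3 ≤ m) {i i' : Fin m} :
    (SimpleGraph.cycleGraph m).Adj i i' ↔ i' = i + 1 ∨ i' = i - 1 := by
  rw [SimpleGraph.cycleGraph_adj']
  have h1 : ((1 : Fin m) : ℕ) = 1 := val_one_of hm
  constructor
  · rintro (h | h)
    · right
      have h2 : i - i' = 1 := Fin.ext (by rw [h1]; exact h)
      rw [← h2]; ring
    · left
      have h2 : i' - i = 1 := Fin.ext (by rw [h1]; exact h)
      rw [← h2]; ring
  · rintro (h | h)
    · right; subst h; rw [add_sub_cancel_left, h1]
    · left; subst h; rw [sub_sub_cancel, h1]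

lemma cyl_adj (hm : 3 ≤ m) {p q : Fin m × Fin n} :
    (cylinder m n).Adj p q ↔
      ((q.1 = p.1 + 1 ∨ q.1 = p.1 - 1) ∧ q.2 = p.2) ∨
        (q.1 = p.1 ∧ ((p.2 : ℕ) + 1 = (q.2 : ℕ) ∨ (q.2 : ℕ) + 1 = (p.2 : ℕ))) := by
  show (SimpleGraph.cycleGraph m).Adj p.1 q.1 ∧ p.2 = q.2 ∨
      (SimpleGraph.pathGraph n).Adj p.2 q.2 ∧ p.1 = q.1 ↔ _
  rw [cyc_adj hm, SimpleGraph.pathGraph_adj]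
  constructor
  · rintro (⟨h1, h2⟩ | ⟨h1, h2⟩)
    · exact Or.inl ⟨h1, h2.symm⟩
    · exact Or.inr ⟨h2.symm, h1⟩
  · rintro (⟨h1, h2⟩ | ⟨h1, h2⟩)
    · exact Or.inl ⟨h1, h2.symm⟩
    · exact Or.inr ⟨h2, h1.symm⟩

lemma fin_add_one_ne (hm : 3 ≤ m) (i : Fin m) : i + 1 ≠ i := by
  intro h
  have h2 := congrArg (· - i) h
  simp only [add_sub_cancel_left, sub_self] at h2
  have h3 := congrArg Fin.val h2
  rw [val_one_of hm] at h3
  simp at h3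

lemma fin_sub_one_ne (hm : 3 ≤ m) (i : Fin m) : i - 1 ≠ i := by
  intro h
  have h2 := congrArg (i - ·) h
  simp only [sub_sub_cancel, sub_self] at h2
  have h3 := congrArg Fin.val h2
  rw [val_one_of hm] at h3
  simp at h3

lemma fin_two_ne_zero (hm : 3 ≤ m) : (2 : Fin m) ≠ 0 := by
  intro h
  have h1 := congrArg Fin.val h
  rw [Fin.val_zero] at h1
  have h2 : ((2 : Fin m) : ℕ) = (1 + 1) % m := by
    rw [show (2 : Fin m) = 1 + 1 by norm_num, Fin.val_add, val_one_of hm]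
  rw [h2, Nat.mod_eq_of_lt (by omega)] at h1
  omega

lemma fin_add_ne_sub (hm : 3 ≤ m) (i : Fin m) : i + 1 ≠ i - 1 := by
  intro h
  have h1 : (i + 1) - (i - 1) = 0 := by rw [h, sub_self]
  have h2 : (i + 1) - (i - 1) = 2 := by ring
  rw [h2] at h1
  exact fin_two_ne_zero hm h1

lemma mem_closed (hm : 3 ≤ m) {i : Fin m} {j : Fin n} {u : Fin m × Fin n} :
    ((cylinder m n).Adj u (i, j) ∨ u = (i, j)) ↔
      (u = (i, j) ∨ u = (i + 1, j) ∨ u = (i - 1, j) ∨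
        (u.1 = i ∧ ((j : ℕ) + 1 = (u.2 : ℕ) ∨ (u.2 : ℕ) + 1 = (j : ℕ)))) := by
  rw [SimpleGraph.adj_comm, cyl_adj hm]
  obtain ⟨u1, u2⟩ := u
  simp only [Prod.mk.injEq]
  tauto

lemma adj_from_right (hm : 3 ≤ m) (i : Fin m) (j : Fin n) :
    (cylinder m n).Adj (i + 1, j) (i, j) := by
  rw [cyl_adj hm]
  exact Or.inl ⟨Or.inr (by rw [add_sub_cancel_right]), rfl⟩

lemma adj_from_left (hm : 3 ≤ m) (i : Fin m) (j : Fin n) :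
    (cylinder m n).Adj (i - 1, j) (i, j) := by
  rw [cyl_adj hm]
  exact Or.inl ⟨Or.inl (by rw [sub_add_cancel]), rfl⟩

lemma adj_vert (hm : 3 ≤ m) {i : Fin m} {j j' : Fin n} (h : (j' : ℕ) = (j : ℕ) + 1) :
    (cylinder m n).Adj (i, j') (i, j) := by
  rw [cyl_adj hm]
  exact Or.inr ⟨rfl, Or.inr h.symm⟩

lemma adj_vert_down (hm : 3 ≤ m) {i : Fin m} {j j' : Fin n} (h : (j' : ℕ) + 1 = (j : ℕ)) :
    (cylinder m n).Adj (i, j') (i, j) := by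
  rw [cyl_adj hm]
  exact Or.inr ⟨rfl, Or.inl h⟩

end A

section D
variable {m n : ℕ} [NeZero m]

noncomputable def dd (D : Set (Fin m × Fin n)) (a : Fin m) (b : ℕ) : ℕ :=
  if h : b < n then (if (a, (⟨b, h⟩ : Fin n)) ∈ D then 1 else 0) else 0

lemma dd_le_one (D : Set (Fin m × Fin n)) (a : Fin m) (b : ℕ) : dd D a b ≤ 1 := by
  rw [dd]; split
  · split <;> omega
  · omega

lemma dd_oob (D : Set (Fin m × Fin n)) (a : Fin m) {b : ℕ} (h : ¬ b < n) : dd D a b = 0 := by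
  rw [dd, dif_neg h]

lemma key (hm : 3 ≤ m) {D : Set (Fin m × Fin n)}
    (hD : IsEfficientDominating (cylinder m n) D) (a : Fin m) {b : ℕ} (hb : b < n) :
    dd D a b + dd D (a + 1) b + dd D (a - 1) b + dd D a (b + 1)
      + (if b = 0 then 0 else dd D a (b - 1)) = 1 := by
  classical
  obtain ⟨u, ⟨huD, huN⟩, huni⟩ := hD (a, ⟨b, hb⟩)
  have hslot : ∀ w : Fin m × Fin n,
      ((cylinder m n).Adj w (a, ⟨b, hb⟩) ∨ w = (a, ⟨b, hb⟩)) →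
      ((if w ∈ D then (1 : ℕ) else 0) = if w = u then 1 else 0) := by
    intro w hw
    by_cases hwD : w ∈ D
    · rw [if_pos hwD, if_pos (huni w ⟨hwD, hw⟩)]
    · rw [if_neg hwD, if_neg (show ¬ w = u from fun h => hwD (by rw [h]; exact huD))]
  have hp1 : ∀ {c d : Fin m} {j j' : Fin n}, c ≠ d → ((c, j) : Fin m × Fin n) ≠ (d, j') :=
    fun h hh => h (congrArg Prod.fst hh)
  have hp2 : ∀ {c d : Fin m} {j j' : Fin n}, (j : ℕ) ≠ (j' : ℕ) →
      ((c, j) : Fin m × Fin n) ≠ (d, j') :=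
    fun h hh => h (congrArg (fun p => ((Prod.snd p : Fin n) : ℕ)) hh)
  have t0 : dd D a b = if ((a, ⟨b, hb⟩) : Fin m × Fin n) = u then 1 else 0 := by
    rw [dd, dif_pos hb]; exact hslot _ (Or.inr rfl)
  have t1 : dd D (a + 1) b = if ((a + 1, ⟨b, hb⟩) : Fin m × Fin n) = u then 1 else 0 := by
    rw [dd, dif_pos hb]; exact hslot _ (Or.inl (adj_from_right hm a ⟨b, hb⟩))
  have t2 : dd D (a - 1) b = if ((a - 1, ⟨b, hb⟩) : Fin m × Fin n) = u then 1 else 0 := by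
    rw [dd, dif_pos hb]; exact hslot _ (Or.inl (adj_from_left hm a ⟨b, hb⟩))
  have hu' := (mem_closed hm).mp huN
  rw [t0, t1, t2]
  by_cases hb1 : b + 1 < n
  · have t3 : dd D a (b + 1) = if ((a, ⟨b + 1, hb1⟩) : Fin m × Fin n) = u then 1 else 0 := by
      rw [dd, dif_pos hb1]; exact hslot _ (Or.inl (adj_vert hm rfl))
    rw [t3]
    by_cases hb0 : b = 0
    · rw [if_pos hb0]
      rcases hu' with hu | hu | hu | ⟨hu1, hu2⟩
      · subst hu
        rw [if_pos rfl, if_neg (hp1 (fin_add_one_ne hm a)),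
          if_neg (hp1 (fin_sub_one_ne hm a)), if_neg (hp2 (show b + 1 ≠ b by omega))]
      · subst hu
        rw [if_neg (hp1 (fin_add_one_ne hm a).symm), if_pos rfl,
          if_neg (hp1 (fin_add_ne_sub hm a).symm), if_neg (hp2 (show b + 1 ≠ b by omega))]
      · subst hu
        rw [if_neg (hp1 (fin_sub_one_ne hm a).symm), if_neg (hp1 (fin_add_ne_sub hm a)),
          if_pos rfl, if_neg (hp2 (show b + 1 ≠ b by omega))]
      · simp only [show ((⟨b, hb⟩ : Fin n) : ℕ) = b from rfl] at hu2
        rcases hu2 with h5 | h5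
        · have hueq : u = (a, ⟨b + 1, hb1⟩) := Prod.ext hu1 (Fin.ext h5.symm)
          subst hueq
          rw [if_neg (hp2 (show b ≠ b + 1 by omega)),
            if_neg (hp1 (fin_add_one_ne hm a)), if_neg (hp1 (fin_sub_one_ne hm a)),
            if_pos rfl]
        · exfalso; omega
    · rw [if_neg hb0]
      have h4 : b - 1 < n := by omega
      have t4 : dd D a (b - 1) = if ((a, ⟨b - 1, h4⟩) : Fin m × Fin n) = u then 1 else 0 := by
        rw [dd, dif_pos h4]
        exact hslot _ (Or.inl (adj_vert_down hm (show (b - 1) + 1 = b by omega)))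
      rw [t4]
      rcases hu' with hu | hu | hu | ⟨hu1, hu2⟩
      · subst hu
        rw [if_pos rfl, if_neg (hp1 (fin_add_one_ne hm a)),
          if_neg (hp1 (fin_sub_one_ne hm a)), if_neg (hp2 (show b + 1 ≠ b by omega)),
          if_neg (hp2 (show b - 1 ≠ b by omega))]
      · subst hu
        rw [if_neg (hp1 (fin_add_one_ne hm a).symm), if_pos rfl,
          if_neg (hp1 (fin_add_ne_sub hm a).symm), if_neg (hp2 (show b + 1 ≠ b by omega)),
          if_neg (hp2 (show b - 1 ≠ b by omega))]
      · subst hu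
        rw [if_neg (hp1 (fin_sub_one_ne hm a).symm), if_neg (hp1 (fin_add_ne_sub hm a)),
          if_pos rfl, if_neg (hp2 (show b + 1 ≠ b by omega)),
          if_neg (hp2 (show b - 1 ≠ b by omega))]
      · simp only [show ((⟨b, hb⟩ : Fin n) : ℕ) = b from rfl] at hu2
        rcases hu2 with h5 | h5
        · have hueq : u = (a, ⟨b + 1, hb1⟩) := Prod.ext hu1 (Fin.ext h5.symm)
          subst hueq
          rw [if_neg (hp2 (show b ≠ b + 1 by omega)),
            if_neg (hp1 (fin_add_one_ne hm a)), if_neg (hp1 (fin_sub_one_ne hm a)),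
            if_pos rfl,
            if_neg (hp2 (show b - 1 ≠ b + 1 by omega))]
        · have hueq : u = (a, ⟨b - 1, h4⟩) := Prod.ext hu1 (Fin.ext (show ((u.2 : ℕ)) = b - 1 by omega))
          subst hueq
          rw [if_neg (hp2 (show b ≠ b - 1 by omega)),
            if_neg (hp1 (fin_add_one_ne hm a)), if_neg (hp1 (fin_sub_one_ne hm a)),
            if_neg (hp2 (show b + 1 ≠ b - 1 by omega)),
            if_pos rfl]
  · have t3 : dd D a (b + 1) = 0 := dd_oob D a hb1
    rw [t3]
    by_cases hb0 : b = 0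
    · rw [if_pos hb0]
      rcases hu' with hu | hu | hu | ⟨hu1, hu2⟩
      · subst hu
        rw [if_pos rfl, if_neg (hp1 (fin_add_one_ne hm a)),
          if_neg (hp1 (fin_sub_one_ne hm a))]
      · subst hu
        rw [if_neg (hp1 (fin_add_one_ne hm a).symm), if_pos rfl,
          if_neg (hp1 (fin_add_ne_sub hm a).symm)]
      · subst hu
        rw [if_neg (hp1 (fin_sub_one_ne hm a).symm), if_neg (hp1 (fin_add_ne_sub hm a)),
          if_pos rfl]
      · exfalso
        have := u.2.isLt
        omega
    · rw [if_neg hb0]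
      have h4 : b - 1 < n := by omega
      have t4 : dd D a (b - 1) = if ((a, ⟨b - 1, h4⟩) : Fin m × Fin n) = u then 1 else 0 := by
        rw [dd, dif_pos h4]
        exact hslot _ (Or.inl (adj_vert_down hm (show (b - 1) + 1 = b by omega)))
      rw [t4]
      rcases hu' with hu | hu | hu | ⟨hu1, hu2⟩
      · subst hu
        rw [if_pos rfl, if_neg (hp1 (fin_add_one_ne hm a)),
          if_neg (hp1 (fin_sub_one_ne hm a)), if_neg (hp2 (show b - 1 ≠ b by omega))]
      · subst hu
        rw [if_neg (hp1 (fin_add_one_ne hm a).symm), if_pos rfl,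
          if_neg (hp1 (fin_add_ne_sub hm a).symm), if_neg (hp2 (show b - 1 ≠ b by omega))]
      · subst hu
        rw [if_neg (hp1 (fin_sub_one_ne hm a).symm), if_neg (hp1 (fin_add_ne_sub hm a)),
          if_pos rfl, if_neg (hp2 (show b - 1 ≠ b by omega))]
      · simp only [show ((⟨b, hb⟩ : Fin n) : ℕ) = b from rfl] at hu2
        rcases hu2 with h5 | h5
        · exfalso
          have := u.2.isLt
          omega
        · have hueq : u = (a, ⟨b - 1, h4⟩) := Prod.ext hu1 (Fin.ext (show ((u.2 : ℕ)) = b - 1 by omega))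
          subst hueq
          rw [if_neg (hp2 (show b ≠ b - 1 by omega)),
            if_neg (hp1 (fin_add_one_ne hm a)), if_neg (hp1 (fin_sub_one_ne hm a)),
            if_pos rfl]

end D

section E
variable {m n : ℕ} [NeZero m]

lemma fin_natCast_succ (a0 : Fin m) (x : ℕ) :
    a0 + ((x + 1 : ℕ) : Fin m) = a0 + ((x : ℕ) : Fin m) + 1 := by
  push_cast
  ring

lemma no_n_ge3 (hm : 3 ≤ m) (hn : 3 ≤ n) {D : Set (Fin m × Fin n)}
    (hD : IsEfficientDominating (cylinder m n) D) : False := by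
  have h0n : 0 < n := by omega
  have h1n : 1 < n := by omega
  have h2n : 2 < n := by omega
  have hK0 : ∀ a : Fin m, dd D a 0 + dd D (a + 1) 0 + dd D (a - 1) 0 + dd D a 1 = 1 := by
    intro a
    have h := key hm hD a h0n
    simpa using h
  have hK1 : ∀ a : Fin m,
      dd D a 1 + dd D (a + 1) 1 + dd D (a - 1) 1 + dd D a 2 + dd D a 0 = 1 := by
    intro a
    have h := key hm hD a h1n
    simpa using h
  have hK2 : ∀ a : Fin m,
      dd D a 2 + dd D (a + 1) 2 + dd D (a - 1) 2 + dd D a 3 + dd D a 1 = 1 := by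
    intro a
    have h := key hm hD a h2n
    simpa using h
  have hK3 : 3 < n → ∀ a : Fin m,
      dd D a 3 + dd D (a + 1) 3 + dd D (a - 1) 3 + dd D a 4 + dd D a 2 = 1 := by
    intro h3n a
    have h := key hm hD a h3n
    simpa using h
  have hle : ∀ (a : Fin m) (b : ℕ), dd D a b ≤ 1 := fun a b => dd_le_one D a b
  -- row 0 is nonempty
  have hex : ∃ a : Fin m, dd D a 0 = 1 := by
    by_contra h
    push_neg at h
    have hz : ∀ a : Fin m, dd D a 0 = 0 := fun a => by have := hle a 0; have := h a; omega
    have hs1 : ∀ a : Fin m, dd D a 1 = 1 := by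
      intro a
      have := hK0 a
      rw [hz a, hz (a + 1), hz (a - 1)] at this
      omega
    have := hK1 0
    rw [hs1 0, hs1 (0 + 1), hs1 (0 - 1), hz 0] at this
    omega
  obtain ⟨a0, ha0⟩ := hex
  -- gap 3 is impossible
  have gap3 : ∀ a : Fin m, dd D a 0 = 1 → dd D (a + 1 + 1 + 1) 0 = 1 → False := by
    intro a h1 h2
    have k0 := hK0 a
    have k1 := hK0 (a + 1)
    have k2 := hK0 (a + 1 + 1)
    have k3 := hK0 (a + 1 + 1 + 1)
    have l1 := hK1 (a + 1)
    have l2 := hK1 (a + 1 + 1)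
    have m1 := hK2 (a + 1)
    simp only [add_sub_cancel_right] at k1 k2 k3 l1 l2 m1
    have b1 := hle (a - 1) 0
    have b2 := hle (a + 1 + 1 + 1 + 1) 0
    have b3 := hle a 2
    have b4 := hle (a + 1 + 1 + 1) 1
    have b5 := hle (a + 1) 3
    have b6 := hle (a - 1) 1
    omega
  have gap3' : ∀ a : Fin m, dd D a 0 = 1 → dd D (a - 1 - 1 - 1) 0 = 1 → False := by
    intro a h1 h2
    refine gap3 (a - 1 - 1 - 1) h2 ?_
    rw [sub_add_cancel, sub_add_cancel, sub_add_cancel]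
    exact h1
  -- local analysis around a0
  have k0 := hK0 a0
  have k0r := hK0 (a0 + 1)
  have k0l := hK0 (a0 - 1)
  have k0rr := hK0 (a0 + 1 + 1)
  have k0ll := hK0 (a0 - 1 - 1)
  simp only [add_sub_cancel_right, sub_add_cancel] at k0r k0l k0rr k0ll
  have hg1 : dd D (a0 + 1 + 1 + 1) 0 = 0 := by
    by_cases h : dd D (a0 + 1 + 1 + 1) 0 = 1
    · exact absurd (gap3 a0 ha0 h) (fun f => f)
    · have := hle (a0 + 1 + 1 + 1) 0
      omega
  have hg2 : dd D (a0 - 1 - 1 - 1) 0 = 0 := by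
    by_cases h : dd D (a0 - 1 - 1 - 1) 0 = 1
    · exact absurd (gap3' a0 ha0 h) (fun f => f)
    · have := hle (a0 - 1 - 1 - 1) 0
      omega
  have e1 : dd D (a0 + 1) 0 = 0 := by
    have := hle (a0 - 1) 0
    have := hle a0 1
    have := hle (a0 + 1) 0
    omega
  have e2 : dd D (a0 - 1) 0 = 0 := by
    have := hle (a0 - 1) 0
    have := hle a0 1
    omega
  have e3 : dd D a0 1 = 0 := by
    have := hle a0 1
    omega
  have e4 : dd D (a0 + 1 + 1) 0 = 0 := by
    have := hle (a0 + 1 + 1) 0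
    have := hle (a0 + 1) 1
    omega
  have e5 : dd D (a0 + 1) 1 = 0 := by
    have := hle (a0 + 1) 1
    omega
  have e6 : dd D (a0 - 1 - 1) 0 = 0 := by
    have := hle (a0 - 1 - 1) 0
    have := hle (a0 - 1) 1
    omega
  have e7 : dd D (a0 - 1) 1 = 0 := by
    have := hle (a0 - 1) 1
    omega
  have e8 : dd D (a0 + 1 + 1) 1 = 1 := by
    have := hle (a0 + 1 + 1) 1
    omega
  have e9 : dd D (a0 - 1 - 1) 1 = 1 := by
    have := hle (a0 - 1 - 1) 1
    omega
  have l0 := hK1 a0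
  have l0r := hK1 (a0 + 1)
  have l0l := hK1 (a0 - 1)
  have l0rr := hK1 (a0 + 1 + 1)
  simp only [add_sub_cancel_right, sub_add_cancel] at l0r l0l l0rr
  have e10 : dd D a0 2 = 0 := by omega
  have e11 : dd D (a0 + 1) 2 = 0 := by omega
  have e12 : dd D (a0 - 1) 2 = 0 := by omega
  have e13 : dd D (a0 + 1 + 1) 2 = 0 := by
    have := hle (a0 + 1 + 1 + 1) 1
    omega
  have m0 := hK2 a0
  have m0r := hK2 (a0 + 1)
  simp only [add_sub_cancel_right, sub_add_cancel] at m0r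
  have hu0 : dd D a0 3 = 1 := by omega
  have hu1 : dd D (a0 + 1) 3 = 1 := by omega
  have hn4 : 3 < n := by
    by_contra h
    have : dd D a0 3 = 0 := dd_oob D a0 (by omega)
    omega
  have p0 := hK3 hn4 a0
  have bu1 := hle (a0 - 1) 3
  have bd := hle a0 4
  omega

end E

section F
variable {m : ℕ} [NeZero m]

lemma val_add_one (hm : 3 ≤ m) (i : Fin m) : ((i + 1 : Fin m) : ℕ) = ((i : ℕ) + 1) % m := by
  rw [Fin.val_add, val_one_of hm]

lemma val_sub_one (hm : 3 ≤ m) (i : Fin m) : ((i - 1 : Fin m) : ℕ) = (m - 1 + (i : ℕ)) % m := by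
  rw [Fin.sub_def]
  simp only [val_one_of hm]

lemma n1_mod3 (hm : 3 ≤ m) {D : Set (Fin m × Fin 1)}
    (hD : IsEfficientDominating (cylinder m 1) D) : m % 3 = 0 := by
  have hK0 : ∀ a : Fin m, dd D a 0 + dd D (a + 1) 0 + dd D (a - 1) 0 = 1 := by
    intro a
    have h := key hm hD a (show (0:ℕ) < 1 by omega)
    simpa [dd_oob D a (show ¬ (1:ℕ) < 1 by omega)] using h
  have hle : ∀ (a : Fin m) (b : ℕ), dd D a b ≤ 1 := fun a b => dd_le_one D a b
  have step : ∀ a : Fin m, dd D a 0 = 1 →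
      dd D (a + 1) 0 = 0 ∧ dd D (a + 1 + 1) 0 = 0 ∧ dd D (a + 1 + 1 + 1) 0 = 1 := by
    intro a h
    have k0 := hK0 a
    have k1 := hK0 (a + 1)
    have k2 := hK0 (a + 1 + 1)
    simp only [add_sub_cancel_right] at k1 k2
    have b1 := hle (a - 1) 0
    have b2 := hle (a + 1) 0
    have b3 := hle (a + 1 + 1) 0
    have b4 := hle (a + 1 + 1 + 1) 0
    omega
  have hex : ∃ a : Fin m, dd D a 0 = 1 := by
    by_contra h
    push_neg at h
    have k0 := hK0 0
    have b1 := hle 0 0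
    have b2 := hle (0 + 1) 0
    have b3 := hle (0 - 1) 0
    have h1 := h 0
    have h2 := h (0 + 1)
    have h3 := h (0 - 1)
    omega
  obtain ⟨a0, ha0⟩ := hex
  have iter : ∀ t : ℕ, dd D (a0 + ((3 * t : ℕ) : Fin m)) 0 = 1 := by
    intro t
    induction t with
    | zero => simpa using ha0
    | succ t ih =>
      have h := (step _ ih).2.2
      have e : a0 + ((3 * t : ℕ) : Fin m) + 1 + 1 + 1 = a0 + ((3 * (t + 1) : ℕ) : Fin m) := by
        push_cast
        ring
      rw [e] at h
      exact h
  by_contra hmod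
  have hq : m = 3 * (m / 3) + m % 3 := (Nat.div_add_mod m 3).symm
  have hcase : m % 3 = 1 ∨ m % 3 = 2 := by omega
  rcases hcase with hc | hc
  · have h1 := (step _ (iter (m / 3))).1
    have e : a0 + ((3 * (m / 3) : ℕ) : Fin m) + 1 = a0 + ((3 * (m / 3) + 1 : ℕ) : Fin m) := by
      push_cast
      ring
    rw [e] at h1
    have e2 : ((3 * (m / 3) + 1 : ℕ) : Fin m) = ((m : ℕ) : Fin m) :=
      congrArg (fun x : ℕ => (x : Fin m)) (by omega)
    rw [e2, Fin.natCast_self, add_zero] at h1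
    omega
  · have h1 := (step _ (iter (m / 3))).2.1
    have e : a0 + ((3 * (m / 3) : ℕ) : Fin m) + 1 + 1 = a0 + ((3 * (m / 3) + 2 : ℕ) : Fin m) := by
      push_cast
      ring
    rw [e] at h1
    have e2 : ((3 * (m / 3) + 2 : ℕ) : Fin m) = ((m : ℕ) : Fin m) :=
      congrArg (fun x : ℕ => (x : Fin m)) (by omega)
    rw [e2, Fin.natCast_self, add_zero] at h1
    omega

end F

section G
variable {m : ℕ} [NeZero m]

lemma n1_exists (hm : 3 ≤ m) (h3 : m % 3 = 0) :
    ∃ D : Set (Fin m × Fin 1), IsEfficientDominating (cylinder m 1) D := by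
  have hdvd : 3 ∣ m := ⟨m / 3, by omega⟩
  refine ⟨{p | (p.1 : ℕ) % 3 = 0}, ?_⟩
  rintro ⟨i, j⟩
  have hv1 : ((i + 1 : Fin m) : ℕ) % 3 = ((i : ℕ) + 1) % 3 := by
    rw [val_add_one hm, Nat.mod_mod_of_dvd _ hdvd]
  have hv2 : ((i - 1 : Fin m) : ℕ) % 3 = ((i : ℕ) + 2) % 3 := by
    rw [val_sub_one hm, Nat.mod_mod_of_dvd _ hdvd]
    have : m - 1 + (i : ℕ) = (i + 2) + 3 * (m / 3 - 1) := by omega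
    rw [this]
    omega
  have hchar : ∀ u : Fin m × Fin 1,
      ((cylinder m 1).Adj u (i, j) ∨ u = (i, j)) ↔
        (u = (i, j) ∨ u = (i + 1, j) ∨ u = (i - 1, j)) := by
    intro u
    rw [mem_closed hm]
    constructor
    · rintro (h | h | h | ⟨h1, h2 | h2⟩)
      · exact Or.inl h
      · exact Or.inr (Or.inl h)
      · exact Or.inr (Or.inr h)
      · exfalso; have := u.2.isLt; omega
      · exfalso; have := j.isLt; omega
    · rintro (h | h | h)
      · exact Or.inl h
      · exact Or.inr (Or.inl h)
      · exact Or.inr (Or.inr (Or.inl h))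
  have hcase : (i : ℕ) % 3 = 0 ∨ (i : ℕ) % 3 = 1 ∨ (i : ℕ) % 3 = 2 := by omega
  rcases hcase with hc | hc | hc
  · refine ⟨(i, j), ⟨hc, Or.inr rfl⟩, ?_⟩
    rintro y ⟨hyD, hyN⟩
    rcases (hchar y).mp hyN with h | h | h
    · exact h
    · exfalso
      rw [h] at hyD
      have : ((i + 1 : Fin m) : ℕ) % 3 = 0 := hyD
      rw [hv1] at this
      omega
    · exfalso
      rw [h] at hyD
      have : ((i - 1 : Fin m) : ℕ) % 3 = 0 := hyD
      rw [hv2] at this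
      omega
  · refine ⟨(i - 1, j), ⟨show ((i - 1 : Fin m) : ℕ) % 3 = 0 by rw [hv2]; omega,
      Or.inl (adj_from_left hm i j)⟩, ?_⟩
    rintro y ⟨hyD, hyN⟩
    rcases (hchar y).mp hyN with h | h | h
    · exfalso
      rw [h] at hyD
      have : (i : ℕ) % 3 = 0 := hyD
      omega
    · exfalso
      rw [h] at hyD
      have : ((i + 1 : Fin m) : ℕ) % 3 = 0 := hyD
      rw [hv1] at this
      omega
    · exact h
  · refine ⟨(i + 1, j), ⟨show ((i + 1 : Fin m) : ℕ) % 3 = 0 by rw [hv1]; omega,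
      Or.inl (adj_from_right hm i j)⟩, ?_⟩
    rintro y ⟨hyD, hyN⟩
    rcases (hchar y).mp hyN with h | h | h
    · exfalso
      rw [h] at hyD
      have : (i : ℕ) % 3 = 0 := hyD
      omega
    · exact h
    · exfalso
      rw [h] at hyD
      have : ((i - 1 : Fin m) : ℕ) % 3 = 0 := hyD
      rw [hv2] at this
      omega

end G

section H
variable {m : ℕ} [NeZero m]

lemma n2_mod4 (hm : 3 ≤ m) {D : Set (Fin m × Fin 2)}
    (hD : IsEfficientDominating (cylinder m 2) D) : m % 4 = 0 := by
  have hK0 : ∀ a : Fin m, dd D a 0 + dd D (a + 1) 0 + dd D (a - 1) 0 + dd D a 1 = 1 := by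
    intro a
    have h := key hm hD a (show (0:ℕ) < 2 by omega)
    simpa using h
  have hK1 : ∀ a : Fin m, dd D a 1 + dd D (a + 1) 1 + dd D (a - 1) 1 + dd D a 0 = 1 := by
    intro a
    have h := key hm hD a (show (1:ℕ) < 2 by omega)
    simpa [dd_oob D a (show ¬ (2:ℕ) < 2 by omega)] using h
  have hle : ∀ (a : Fin m) (b : ℕ), dd D a b ≤ 1 := fun a b => dd_le_one D a b
  have hex : ∃ a : Fin m, dd D a 0 = 1 := by
    by_contra h
    push_neg at h
    have hz : ∀ a : Fin m, dd D a 0 = 0 := fun a => by have := hle a 0; have := h a; omega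
    have hs1 : ∀ a : Fin m, dd D a 1 = 1 := by
      intro a
      have := hK0 a
      rw [hz a, hz (a + 1), hz (a - 1)] at this
      omega
    have := hK1 0
    rw [hs1 0, hs1 (0 + 1), hs1 (0 - 1), hz 0] at this
    omega
  obtain ⟨a0, ha0⟩ := hex
  have gap3 : ∀ a : Fin m, dd D a 0 = 1 → dd D (a + 1 + 1 + 1) 0 = 1 → False := by
    intro a h1 h2
    have k0 := hK0 a
    have k1 := hK0 (a + 1)
    have k2 := hK0 (a + 1 + 1)
    have l1 := hK1 (a + 1)
    simp only [add_sub_cancel_right] at k1 k2 l1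
    have b1 := hle (a - 1) 0
    have b2 := hle (a - 1) 1
    omega
  have step : ∀ a : Fin m, dd D a 0 = 1 →
      dd D (a + 1) 0 = 0 ∧ dd D (a + 1 + 1) 0 = 0 ∧ dd D (a + 1 + 1 + 1) 0 = 0 ∧
        dd D (a + 1 + 1 + 1 + 1) 0 = 1 := by
    intro a h
    have hg : dd D (a + 1 + 1 + 1) 0 = 0 := by
      by_cases hg1 : dd D (a + 1 + 1 + 1) 0 = 1
      · exact absurd (gap3 a h hg1) (fun f => f)
      · have := hle (a + 1 + 1 + 1) 0
        omega
    have k0 := hK0 a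
    have k1 := hK0 (a + 1)
    have k2 := hK0 (a + 1 + 1)
    have k3 := hK0 (a + 1 + 1 + 1)
    have l2 := hK1 (a + 1 + 1)
    simp only [add_sub_cancel_right] at k1 k2 k3 l2
    have b1 := hle (a - 1) 0
    have b2 := hle (a - 1) 1
    have b3 := hle (a + 1 + 1 + 1) 1
    have b4 := hle (a + 1 + 1 + 1 + 1) 0
    omega
  have iter : ∀ t : ℕ, dd D (a0 + ((4 * t : ℕ) : Fin m)) 0 = 1 := by
    intro t
    induction t with
    | zero => simpa using ha0
    | succ t ih =>
      have h := (step _ ih).2.2.2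
      have e : a0 + ((4 * t : ℕ) : Fin m) + 1 + 1 + 1 + 1
          = a0 + ((4 * (t + 1) : ℕ) : Fin m) := by
        push_cast
        ring
      rw [e] at h
      exact h
  by_contra hmod
  have hq : m = 4 * (m / 4) + m % 4 := (Nat.div_add_mod m 4).symm
  have hfin : ∀ c : ℕ, c = m →
      dd D (a0 + ((c : ℕ) : Fin m)) 0 = dd D a0 0 := by
    intro c hc
    subst hc
    rw [Fin.natCast_self, add_zero]
  have hcase : m % 4 = 1 ∨ m % 4 = 2 ∨ m % 4 = 3 := by omega
  rcases hcase with hc | hc | hc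
  · have h1 := (step _ (iter (m / 4))).1
    have e : a0 + ((4 * (m / 4) : ℕ) : Fin m) + 1 = a0 + ((4 * (m / 4) + 1 : ℕ) : Fin m) := by
      push_cast; ring
    rw [e] at h1
    rw [show (4 * (m / 4) + 1 : ℕ) = m by omega, Fin.natCast_self, add_zero] at h1
    omega
  · have h1 := (step _ (iter (m / 4))).2.1
    have e : a0 + ((4 * (m / 4) : ℕ) : Fin m) + 1 + 1
        = a0 + ((4 * (m / 4) + 2 : ℕ) : Fin m) := by
      push_cast; ring
    rw [e] at h1
    rw [show (4 * (m / 4) + 2 : ℕ) = m by omega, Fin.natCast_self, add_zero] at h1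
    omega
  · have h1 := (step _ (iter (m / 4))).2.2.1
    have e : a0 + ((4 * (m / 4) : ℕ) : Fin m) + 1 + 1 + 1
        = a0 + ((4 * (m / 4) + 3 : ℕ) : Fin m) := by
      push_cast; ring
    rw [e] at h1
    rw [show (4 * (m / 4) + 3 : ℕ) = m by omega, Fin.natCast_self, add_zero] at h1
    omega

end H

section I
variable {m : ℕ} [NeZero m]

lemma n2_exists (hm : 3 ≤ m) (h4 : m % 4 = 0) :
    ∃ D : Set (Fin m × Fin 2), IsEfficientDominating (cylinder m 2) D := by
  have hm4 : 4 ≤ m := by omega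
  have hdvd : 4 ∣ m := ⟨m / 4, by omega⟩
  refine ⟨{p | ((p.2 : ℕ) = 0 ∧ (p.1 : ℕ) % 4 = 0) ∨ ((p.2 : ℕ) = 1 ∧ (p.1 : ℕ) % 4 = 2)}, ?_⟩
  rintro ⟨i, j⟩
  have hv1 : ((i + 1 : Fin m) : ℕ) % 4 = ((i : ℕ) + 1) % 4 := by
    rw [val_add_one hm, Nat.mod_mod_of_dvd _ hdvd]
  have hv2 : ((i - 1 : Fin m) : ℕ) % 4 = ((i : ℕ) + 3) % 4 := by
    rw [val_sub_one hm, Nat.mod_mod_of_dvd _ hdvd]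
    have : m - 1 + (i : ℕ) = ((i : ℕ) + 3) + 4 * (m / 4 - 1) := by omega
    rw [this]
    omega
  set jo : Fin 2 := ⟨1 - (j : ℕ), by omega⟩ with hjo
  have hjoval : (jo : ℕ) = 1 - (j : ℕ) := rfl
  have hjlt : (j : ℕ) < 2 := j.isLt
  have hadj : (cylinder m 2).Adj (i, jo) (i, j) := by
    by_cases hj0 : (j : ℕ) = 0
    · exact adj_vert hm (by rw [hjoval]; omega)
    · exact adj_vert_down hm (by rw [hjoval]; omega)
  have hchar : ∀ u : Fin m × Fin 2,
      ((cylinder m 2).Adj u (i, j) ∨ u = (i, j)) ↔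
        (u = (i, j) ∨ u = (i + 1, j) ∨ u = (i - 1, j) ∨ u = (i, jo)) := by
    intro u
    rw [mem_closed hm]
    constructor
    · rintro (h | h | h | ⟨h1, h2⟩)
      · exact Or.inl h
      · exact Or.inr (Or.inl h)
      · exact Or.inr (Or.inr (Or.inl h))
      · refine Or.inr (Or.inr (Or.inr ?_))
        have hu2 : (u.2 : ℕ) < 2 := u.2.isLt
        refine Prod.ext h1 (Fin.ext ?_)
        rw [hjoval]
        omega
    · rintro (h | h | h | h)
      · exact Or.inl h
      · exact Or.inr (Or.inl h)
      · exact Or.inr (Or.inr (Or.inl h))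
      · subst h
        refine Or.inr (Or.inr (Or.inr ⟨rfl, ?_⟩))
        rw [hjoval]
        by_cases hj0 : (j : ℕ) = 0
        · left; omega
        · right; omega
  have huniq : ∀ u0 : Fin m × Fin 2,
      (u0 ∈ {p : Fin m × Fin 2 |
          ((p.2 : ℕ) = 0 ∧ (p.1 : ℕ) % 4 = 0) ∨ ((p.2 : ℕ) = 1 ∧ (p.1 : ℕ) % 4 = 2)} ∧
        ((cylinder m 2).Adj u0 (i, j) ∨ u0 = (i, j))) →
      (∀ y, (y ∈ {p : Fin m × Fin 2 |
          ((p.2 : ℕ) = 0 ∧ (p.1 : ℕ) % 4 = 0) ∨ ((p.2 : ℕ) = 1 ∧ (p.1 : ℕ) % 4 = 2)} ∧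
        ((cylinder m 2).Adj y (i, j) ∨ y = (i, j))) → y = u0) →
      ∃! u, u ∈ {p : Fin m × Fin 2 |
          ((p.2 : ℕ) = 0 ∧ (p.1 : ℕ) % 4 = 0) ∨ ((p.2 : ℕ) = 1 ∧ (p.1 : ℕ) % 4 = 2)} ∧
        ((cylinder m 2).Adj u (i, j) ∨ u = (i, j)) :=
    fun u0 h1 h2 => ⟨u0, h1, h2⟩
  have hcase : (i : ℕ) % 4 = 0 ∨ (i : ℕ) % 4 = 1 ∨ (i : ℕ) % 4 = 2 ∨ (i : ℕ) % 4 = 3 := by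
    omega
  by_cases hj0 : (j : ℕ) = 0
  · rcases hcase with hc | hc | hc | hc
    · refine huniq (i, j) ⟨Or.inl ⟨hj0, hc⟩, Or.inr rfl⟩ ?_
      rintro y ⟨hyD, hyN⟩
      rcases (hchar y).mp hyN with h | h | h | h <;> subst h
      · have hy : ((j : ℕ) = 0 ∧ (i : ℕ) % 4 = 0) ∨ ((j : ℕ) = 1 ∧ (i : ℕ) % 4 = 2) := hyD
        rfl
      · have hy : ((j : ℕ) = 0 ∧ ((i + 1 : Fin m) : ℕ) % 4 = 0) ∨ ((j : ℕ) = 1 ∧ ((i + 1 : Fin m) : ℕ) % 4 = 2) := hyD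
        exfalso
        rcases hy with ⟨h1, h2⟩ | ⟨h1, h2⟩ <;> rw [hv1] at h2 <;> omega
      · have hy : ((j : ℕ) = 0 ∧ ((i - 1 : Fin m) : ℕ) % 4 = 0) ∨ ((j : ℕ) = 1 ∧ ((i - 1 : Fin m) : ℕ) % 4 = 2) := hyD
        exfalso
        rcases hy with ⟨h1, h2⟩ | ⟨h1, h2⟩ <;> rw [hv2] at h2 <;> omega
      · have hy : ((jo : ℕ) = 0 ∧ (i : ℕ) % 4 = 0) ∨ ((jo : ℕ) = 1 ∧ (i : ℕ) % 4 = 2) := hyD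
        exfalso
        rcases hy with ⟨h1, h2⟩ | ⟨h1, h2⟩ <;> rw [hjoval] at h1 <;> omega
    · refine huniq (i - 1, j) ⟨Or.inl ⟨hj0, by rw [hv2]; omega⟩, Or.inl (adj_from_left hm i j)⟩ ?_
      rintro y ⟨hyD, hyN⟩
      rcases (hchar y).mp hyN with h | h | h | h <;> subst h
      · have hy : ((j : ℕ) = 0 ∧ (i : ℕ) % 4 = 0) ∨ ((j : ℕ) = 1 ∧ (i : ℕ) % 4 = 2) := hyD
        exfalso
        rcases hy with ⟨h1, h2⟩ | ⟨h1, h2⟩ <;> omega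
      · have hy : ((j : ℕ) = 0 ∧ ((i + 1 : Fin m) : ℕ) % 4 = 0) ∨ ((j : ℕ) = 1 ∧ ((i + 1 : Fin m) : ℕ) % 4 = 2) := hyD
        exfalso
        rcases hy with ⟨h1, h2⟩ | ⟨h1, h2⟩ <;> rw [hv1] at h2 <;> omega
      · have hy : ((j : ℕ) = 0 ∧ ((i - 1 : Fin m) : ℕ) % 4 = 0) ∨ ((j : ℕ) = 1 ∧ ((i - 1 : Fin m) : ℕ) % 4 = 2) := hyD
        rfl
      · have hy : ((jo : ℕ) = 0 ∧ (i : ℕ) % 4 = 0) ∨ ((jo : ℕ) = 1 ∧ (i : ℕ) % 4 = 2) := hyD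
        exfalso
        rcases hy with ⟨h1, h2⟩ | ⟨h1, h2⟩ <;> rw [hjoval] at h1 <;> omega
    · refine huniq (i, jo) ⟨Or.inr ⟨by rw [hjoval]; omega, hc⟩, Or.inl hadj⟩ ?_
      rintro y ⟨hyD, hyN⟩
      rcases (hchar y).mp hyN with h | h | h | h <;> subst h
      · have hy : ((j : ℕ) = 0 ∧ (i : ℕ) % 4 = 0) ∨ ((j : ℕ) = 1 ∧ (i : ℕ) % 4 = 2) := hyD
        exfalso
        rcases hy with ⟨h1, h2⟩ | ⟨h1, h2⟩ <;> omega
      · have hy : ((j : ℕ) = 0 ∧ ((i + 1 : Fin m) : ℕ) % 4 = 0) ∨ ((j : ℕ) = 1 ∧ ((i + 1 : Fin m) : ℕ) % 4 = 2) := hyD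
        exfalso
        rcases hy with ⟨h1, h2⟩ | ⟨h1, h2⟩ <;> rw [hv1] at h2 <;> omega
      · have hy : ((j : ℕ) = 0 ∧ ((i - 1 : Fin m) : ℕ) % 4 = 0) ∨ ((j : ℕ) = 1 ∧ ((i - 1 : Fin m) : ℕ) % 4 = 2) := hyD
        exfalso
        rcases hy with ⟨h1, h2⟩ | ⟨h1, h2⟩ <;> rw [hv2] at h2 <;> omega
      · have hy : ((jo : ℕ) = 0 ∧ (i : ℕ) % 4 = 0) ∨ ((jo : ℕ) = 1 ∧ (i : ℕ) % 4 = 2) := hyD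
        rfl
    · refine huniq (i + 1, j) ⟨Or.inl ⟨hj0, by rw [hv1]; omega⟩, Or.inl (adj_from_right hm i j)⟩ ?_
      rintro y ⟨hyD, hyN⟩
      rcases (hchar y).mp hyN with h | h | h | h <;> subst h
      · have hy : ((j : ℕ) = 0 ∧ (i : ℕ) % 4 = 0) ∨ ((j : ℕ) = 1 ∧ (i : ℕ) % 4 = 2) := hyD
        exfalso
        rcases hy with ⟨h1, h2⟩ | ⟨h1, h2⟩ <;> omega
      · have hy : ((j : ℕ) = 0 ∧ ((i + 1 : Fin m) : ℕ) % 4 = 0) ∨ ((j : ℕ) = 1 ∧ ((i + 1 : Fin m) : ℕ) % 4 = 2) := hyD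
        rfl
      · have hy : ((j : ℕ) = 0 ∧ ((i - 1 : Fin m) : ℕ) % 4 = 0) ∨ ((j : ℕ) = 1 ∧ ((i - 1 : Fin m) : ℕ) % 4 = 2) := hyD
        exfalso
        rcases hy with ⟨h1, h2⟩ | ⟨h1, h2⟩ <;> rw [hv2] at h2 <;> omega
      · have hy : ((jo : ℕ) = 0 ∧ (i : ℕ) % 4 = 0) ∨ ((jo : ℕ) = 1 ∧ (i : ℕ) % 4 = 2) := hyD
        exfalso
        rcases hy with ⟨h1, h2⟩ | ⟨h1, h2⟩ <;> rw [hjoval] at h1 <;> omega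
  · have hj1 : (j : ℕ) = 1 := by omega
    rcases hcase with hc | hc | hc | hc
    · refine huniq (i, jo) ⟨Or.inl ⟨by rw [hjoval]; omega, hc⟩, Or.inl hadj⟩ ?_
      rintro y ⟨hyD, hyN⟩
      rcases (hchar y).mp hyN with h | h | h | h <;> subst h
      · have hy : ((j : ℕ) = 0 ∧ (i : ℕ) % 4 = 0) ∨ ((j : ℕ) = 1 ∧ (i : ℕ) % 4 = 2) := hyD
        exfalso
        rcases hy with ⟨h1, h2⟩ | ⟨h1, h2⟩ <;> omega
      · have hy : ((j : ℕ) = 0 ∧ ((i + 1 : Fin m) : ℕ) % 4 = 0) ∨ ((j : ℕ) = 1 ∧ ((i + 1 : Fin m) : ℕ) % 4 = 2) := hyD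
        exfalso
        rcases hy with ⟨h1, h2⟩ | ⟨h1, h2⟩ <;> rw [hv1] at h2 <;> omega
      · have hy : ((j : ℕ) = 0 ∧ ((i - 1 : Fin m) : ℕ) % 4 = 0) ∨ ((j : ℕ) = 1 ∧ ((i - 1 : Fin m) : ℕ) % 4 = 2) := hyD
        exfalso
        rcases hy with ⟨h1, h2⟩ | ⟨h1, h2⟩ <;> rw [hv2] at h2 <;> omega
      · have hy : ((jo : ℕ) = 0 ∧ (i : ℕ) % 4 = 0) ∨ ((jo : ℕ) = 1 ∧ (i : ℕ) % 4 = 2) := hyD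
        rfl
    · refine huniq (i + 1, j) ⟨Or.inr ⟨hj1, by rw [hv1]; omega⟩, Or.inl (adj_from_right hm i j)⟩ ?_
      rintro y ⟨hyD, hyN⟩
      rcases (hchar y).mp hyN with h | h | h | h <;> subst h
      · have hy : ((j : ℕ) = 0 ∧ (i : ℕ) % 4 = 0) ∨ ((j : ℕ) = 1 ∧ (i : ℕ) % 4 = 2) := hyD
        exfalso
        rcases hy with ⟨h1, h2⟩ | ⟨h1, h2⟩ <;> omega
      · have hy : ((j : ℕ) = 0 ∧ ((i + 1 : Fin m) : ℕ) % 4 = 0) ∨ ((j : ℕ) = 1 ∧ ((i + 1 : Fin m) : ℕ) % 4 = 2) := hyD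
        rfl
      · have hy : ((j : ℕ) = 0 ∧ ((i - 1 : Fin m) : ℕ) % 4 = 0) ∨ ((j : ℕ) = 1 ∧ ((i - 1 : Fin m) : ℕ) % 4 = 2) := hyD
        exfalso
        rcases hy with ⟨h1, h2⟩ | ⟨h1, h2⟩ <;> rw [hv2] at h2 <;> omega
      · have hy : ((jo : ℕ) = 0 ∧ (i : ℕ) % 4 = 0) ∨ ((jo : ℕ) = 1 ∧ (i : ℕ) % 4 = 2) := hyD
        exfalso
        rcases hy with ⟨h1, h2⟩ | ⟨h1, h2⟩ <;> rw [hjoval] at h1 <;> omega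
    · refine huniq (i, j) ⟨Or.inr ⟨hj1, hc⟩, Or.inr rfl⟩ ?_
      rintro y ⟨hyD, hyN⟩
      rcases (hchar y).mp hyN with h | h | h | h <;> subst h
      · have hy : ((j : ℕ) = 0 ∧ (i : ℕ) % 4 = 0) ∨ ((j : ℕ) = 1 ∧ (i : ℕ) % 4 = 2) := hyD
        rfl
      · have hy : ((j : ℕ) = 0 ∧ ((i + 1 : Fin m) : ℕ) % 4 = 0) ∨ ((j : ℕ) = 1 ∧ ((i + 1 : Fin m) : ℕ) % 4 = 2) := hyD
        exfalso
        rcases hy with ⟨h1, h2⟩ | ⟨h1, h2⟩ <;> rw [hv1] at h2 <;> omega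
      · have hy : ((j : ℕ) = 0 ∧ ((i - 1 : Fin m) : ℕ) % 4 = 0) ∨ ((j : ℕ) = 1 ∧ ((i - 1 : Fin m) : ℕ) % 4 = 2) := hyD
        exfalso
        rcases hy with ⟨h1, h2⟩ | ⟨h1, h2⟩ <;> rw [hv2] at h2 <;> omega
      · have hy : ((jo : ℕ) = 0 ∧ (i : ℕ) % 4 = 0) ∨ ((jo : ℕ) = 1 ∧ (i : ℕ) % 4 = 2) := hyD
        exfalso
        rcases hy with ⟨h1, h2⟩ | ⟨h1, h2⟩ <;> rw [hjoval] at h1 <;> omega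
    · refine huniq (i - 1, j) ⟨Or.inr ⟨hj1, by rw [hv2]; omega⟩, Or.inl (adj_from_left hm i j)⟩ ?_
      rintro y ⟨hyD, hyN⟩
      rcases (hchar y).mp hyN with h | h | h | h <;> subst h
      · have hy : ((j : ℕ) = 0 ∧ (i : ℕ) % 4 = 0) ∨ ((j : ℕ) = 1 ∧ (i : ℕ) % 4 = 2) := hyD
        exfalso
        rcases hy with ⟨h1, h2⟩ | ⟨h1, h2⟩ <;> omega
      · have hy : ((j : ℕ) = 0 ∧ ((i + 1 : Fin m) : ℕ) % 4 = 0) ∨ ((j : ℕ) = 1 ∧ ((i + 1 : Fin m) : ℕ) % 4 = 2) := hyD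
        exfalso
        rcases hy with ⟨h1, h2⟩ | ⟨h1, h2⟩ <;> rw [hv1] at h2 <;> omega
      · have hy : ((j : ℕ) = 0 ∧ ((i - 1 : Fin m) : ℕ) % 4 = 0) ∨ ((j : ℕ) = 1 ∧ ((i - 1 : Fin m) : ℕ) % 4 = 2) := hyD
        rfl
      · have hy : ((jo : ℕ) = 0 ∧ (i : ℕ) % 4 = 0) ∨ ((jo : ℕ) = 1 ∧ (i : ℕ) % 4 = 2) := hyD
        exfalso
        rcases hy with ⟨h1, h2⟩ | ⟨h1, h2⟩ <;> rw [hjoval] at h1 <;> omega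

end I

section J
variable {m n : ℕ} [NeZero m]

lemma cyl_deg2 (hm : 3 ≤ m) (u w : Fin m × Fin n) :
    ∃ x, (cylinder m n).Adj u x ∧ x ≠ w := by
  have h1 : (cylinder m n).Adj u (u.1 + 1, u.2) := by
    rw [cyl_adj hm]
    exact Or.inl ⟨Or.inl rfl, rfl⟩
  have h2 : (cylinder m n).Adj u (u.1 - 1, u.2) := by
    rw [cyl_adj hm]
    exact Or.inl ⟨Or.inr rfl, rfl⟩
  by_cases h : (u.1 + 1, u.2) = w
  · refine ⟨(u.1 - 1, u.2), h2, ?_⟩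
    rw [← h]
    intro hh
    exact fin_add_ne_sub hm u.1 (congrArg Prod.fst hh).symm
  · exact ⟨(u.1 + 1, u.2), h1, h⟩

end J

theorem stmt0 (k m n : ℕ) (hk : 2 ≤ k) (hm : 3 ≤ m) (hn : 1 ≤ n) :
    ((∃ D : Set (Fin m × Fin n), IsEfficientDominating (cylinder m n) D) ↔
      (∃ f : Fin m × Fin n → ℕ, IsKRDF k (cylinder m n) f ∧
        ∀ v, nbhdSum (cylinder m n) f v = k + 1)) ∧
    ((∃ D : Set (Fin m × Fin n), IsEfficientDominating (cylinder m n) D) ↔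
      ((n = 1 ∧ m % 3 = 0) ∨ (n = 2 ∧ m % 4 = 0))) := by
  haveI : NeZero m := ⟨by omega⟩
  have iff2 : (∃ D : Set (Fin m × Fin n), IsEfficientDominating (cylinder m n) D) ↔
      ((n = 1 ∧ m % 3 = 0) ∨ (n = 2 ∧ m % 4 = 0)) := by
    constructor
    · rintro ⟨D, hD⟩
      by_cases h1 : n = 1
      · subst h1
        exact Or.inl ⟨rfl, n1_mod3 hm hD⟩
      · by_cases h2 : n = 2
        · subst h2
          exact Or.inr ⟨rfl, n2_mod4 hm hD⟩
        · exact absurd (no_n_ge3 hm (by omega) hD) (fun f => f)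
    · rintro (⟨h1, h3⟩ | ⟨h2, h4⟩)
      · subst h1
        exact n1_exists hm h3
      · subst h2
        exact n2_exists hm h4
  have iff1 : (∃ D : Set (Fin m × Fin n), IsEfficientDominating (cylinder m n) D) ↔
      (∃ f : Fin m × Fin n → ℕ, IsKRDF k (cylinder m n) f ∧
        ∀ v, nbhdSum (cylinder m n) f v = k + 1) := by
    constructor
    · rintro ⟨D, hD⟩
      exact eds_to_f hk D hD
    · rintro ⟨f, hf, hsum⟩
      exact f_to_eds hk (cyl_deg2 hm) f hf hsum
  exact ⟨iff1, iff2⟩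
end

section
/- For all integers k ≥ 1 and n ≥ 2, γ_{[k]R}(C_5 □ P_n) ≤ n(k+1) + 2k. -/
open scoped Classical

/-- The labelling: `k+1` on the shifted diagonal, `k` on two boundary patch vertices. -/
noncomputable def rdfF (n k : ℕ) (p : Fin 5 × Fin n) : ℕ :=
  if (p.1 : ℕ) = 2 * (p.2 : ℕ) % 5 then k + 1
  else if ((p.2 : ℕ) = 0 ∧ (p.1 : ℕ) = 3) ∨ ((p.2 : ℕ) = n - 1 ∧ (p.1 : ℕ) = 2 * n % 5)
    then k else 0

lemma cycle5_adj (x y : Fin 5) (h : (x:ℕ) = ((y:ℕ)+1) % 5 ∨ (y:ℕ) = ((x:ℕ)+1) % 5) :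
    (SimpleGraph.cycleGraph 5).Adj x y := by
  revert h; revert x y; decide

lemma sum_fin_ite {m x c : ℕ} (hc : c < m) :
    ∑ b : Fin m, (if (b:ℕ) = c then x else 0) = x := by
  rw [Finset.sum_eq_single (⟨c, hc⟩ : Fin m)]
  · simp
  · intro b _ hb
    rw [if_neg]
    simpa [Fin.ext_iff] using hb
  · simp

lemma key_s2 {V : Type*} [Fintype V] {k : ℕ} (hk : 1 ≤ k) (G : SimpleGraph V) (f : V → ℕ)
    (v : V) (u0 : V) (hadj : G.Adj v u0) (hu0 : f u0 = k + 1)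
    (hpos : ∀ u, 0 < f u → k ≤ f u) :
    k + anCard G f v ≤ nbhdSum G f v := by
  set A := Finset.univ.filter (fun u => G.Adj v u ∧ 0 < f u) with hA
  have hu0A : u0 ∈ A := by
    simp only [hA, Finset.mem_filter, Finset.mem_univ, true_and]
    exact ⟨hadj, by omega⟩
  have hsub : A ⊆ Finset.univ.filter (fun u => G.Adj v u ∨ u = v) := by
    intro u hu
    simp only [hA, Finset.mem_filter, Finset.mem_univ, true_and] at hu ⊢
    exact Or.inl hu.1
  have h1 : ∑ u ∈ A, f u ≤ nbhdSum G f v := by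
    rw [nbhdSum]; exact Finset.sum_le_sum_of_subset hsub
  have hcard : 1 ≤ A.card := Finset.card_pos.mpr ⟨u0, hu0A⟩
  have h2 : (k + 1) + (A.card - 1) * k ≤ ∑ u ∈ A, f u := by
    rw [← Finset.add_sum_erase A f hu0A, hu0]
    have h3 : (A.erase u0).card * k ≤ ∑ u ∈ A.erase u0, f u := by
      rw [← smul_eq_mul]
      apply Finset.card_nsmul_le_sum
      intro u hu
      have hu' := Finset.mem_of_mem_erase hu
      simp only [hA, Finset.mem_filter, Finset.mem_univ, true_and] at hu'
      exact hpos u hu'.2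
    rw [Finset.card_erase_of_mem hu0A] at h3
    omega
  have h4 : A.card - 1 ≤ (A.card - 1) * k := Nat.le_mul_of_pos_right _ hk
  have : anCard G f v = A.card := rfl
  omega

lemma rdfF_diag (n k c d : ℕ) (hc : c < 5) (hd : d < n) (h : c = 2 * d % 5) :
    rdfF n k (⟨c, hc⟩, ⟨d, hd⟩) = k + 1 := by
  simp only [rdfF, Fin.val_mk]; rw [if_pos h]

lemma exists_big_nbr (n k : ℕ) (hk : 1 ≤ k) (hn : 2 ≤ n) (v : Fin 5 × Fin n)
    (hv : rdfF n k v = 0) :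
    ∃ u, (cylinder 5 n).Adj v u ∧ rdfF n k u = k + 1 := by
  obtain ⟨⟨a, ha⟩, ⟨b, hb⟩⟩ := v
  have hv' : (if a = 2 * b % 5 then k + 1
      else if (b = 0 ∧ a = 3) ∨ (b = n - 1 ∧ a = 2 * n % 5) then k else 0) = 0 := by
    simpa only [rdfF, Fin.val_mk] using hv
  by_cases h1 : a = 2 * b % 5
  · rw [if_pos h1] at hv'; omega
  rw [if_neg h1] at hv'
  by_cases h2 : (b = 0 ∧ a = 3) ∨ (b = n - 1 ∧ a = 2 * n % 5)
  · rw [if_pos h2] at hv'; omega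
  clear hv hv'
  have hcase : a = (2*b%5+1) % 5 ∨ a = (2*b%5+4) % 5 ∨ a = (2*b%5+2) % 5 ∨
      a = (2*b%5+3) % 5 := by
    have hr5 : 2*b%5 < 5 := by omega
    set r := 2*b%5 with hrdef
    interval_cases r <;> omega
  have hmod : 2*b%5 < 5 := by omega
  rcases hcase with hc | hc | hc | hc
  · refine ⟨(⟨2*b % 5, hmod⟩, ⟨b, hb⟩), ?_, rdfF_diag n k _ _ _ _ rfl⟩
    exact SimpleGraph.boxProd_adj.mpr
      (Or.inl ⟨cycle5_adj _ _ (Or.inl (by simp only [Fin.val_mk]; omega)), rfl⟩)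
  · refine ⟨(⟨2*b % 5, hmod⟩, ⟨b, hb⟩), ?_, rdfF_diag n k _ _ _ _ rfl⟩
    exact SimpleGraph.boxProd_adj.mpr
      (Or.inl ⟨cycle5_adj _ _ (Or.inr (by simp only [Fin.val_mk]; omega)), rfl⟩)
  · have hbn : b + 1 < n := by omega
    refine ⟨(⟨a, ha⟩, ⟨b+1, hbn⟩), ?_, rdfF_diag n k _ _ _ _ (by omega)⟩
    exact SimpleGraph.boxProd_adj.mpr
      (Or.inr ⟨SimpleGraph.pathGraph_adj.mpr (Or.inl (by simp only [Fin.val_mk])), rfl⟩)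
  · have hb1 : 1 ≤ b := by omega
    refine ⟨(⟨a, ha⟩, ⟨b-1, by omega⟩), ?_, rdfF_diag n k _ _ _ _ (by omega)⟩
    exact SimpleGraph.boxProd_adj.mpr
      (Or.inr ⟨SimpleGraph.pathGraph_adj.mpr (Or.inr (by simp only [Fin.val_mk]; omega)), rfl⟩)

lemma sum_rdfF_le (n k : ℕ) (hn : 2 ≤ n) :
    ∑ v, rdfF n k v ≤ n * (k + 1) + 2 * k := by
  have hpt : ∀ v : Fin 5 × Fin n, rdfF n k v ≤
      (if (v.1 : ℕ) = 2 * (v.2 : ℕ) % 5 then k + 1 else 0) +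
      ((if (v.2 : ℕ) = 0 ∧ (v.1 : ℕ) = 3 then k else 0) +
       (if (v.2 : ℕ) = n - 1 ∧ (v.1 : ℕ) = 2 * n % 5 then k else 0)) := by
    intro v
    simp only [rdfF]
    split_ifs <;> omega
  calc ∑ v, rdfF n k v ≤ ∑ v : Fin 5 × Fin n,
      ((if (v.1 : ℕ) = 2 * (v.2 : ℕ) % 5 then k + 1 else 0) +
      ((if (v.2 : ℕ) = 0 ∧ (v.1 : ℕ) = 3 then k else 0) +
       (if (v.2 : ℕ) = n - 1 ∧ (v.1 : ℕ) = 2 * n % 5 then k else 0))) :=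
        Finset.sum_le_sum (fun v _ => hpt v)
    _ = (∑ v : Fin 5 × Fin n, if (v.1 : ℕ) = 2 * (v.2 : ℕ) % 5 then k + 1 else 0) +
        ((∑ v : Fin 5 × Fin n, if (v.2 : ℕ) = 0 ∧ (v.1 : ℕ) = 3 then k else 0) +
         (∑ v : Fin 5 × Fin n, if (v.2 : ℕ) = n - 1 ∧ (v.1 : ℕ) = 2 * n % 5 then k else 0)) := by
        rw [Finset.sum_add_distrib, Finset.sum_add_distrib]
    _ ≤ n * (k + 1) + 2 * k := by
        have hS1 : (∑ v : Fin 5 × Fin n, if (v.1 : ℕ) = 2 * (v.2 : ℕ) % 5 then k + 1 else 0)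
            = n * (k + 1) := by
          rw [Fintype.sum_prod_type, Finset.sum_comm]
          have : ∀ b : Fin n, (∑ a : Fin 5, if (a : ℕ) = 2 * (b : ℕ) % 5 then k + 1 else 0)
              = k + 1 := fun b => sum_fin_ite (by omega)
          rw [Finset.sum_congr rfl (fun b _ => this b)]
          simp [mul_comm]
        have hS2 : (∑ v : Fin 5 × Fin n, if (v.2 : ℕ) = 0 ∧ (v.1 : ℕ) = 3 then k else 0) = k := by
          rw [Finset.sum_eq_single ((⟨3, by norm_num⟩ : Fin 5), (⟨0, by omega⟩ : Fin n))]
          · simp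
          · intro v _ hne
            rw [if_neg]
            rintro ⟨hb, ha⟩
            exact hne (Prod.ext (Fin.ext ha) (Fin.ext hb))
          · simp
        have hS3 : (∑ v : Fin 5 × Fin n,
            if (v.2 : ℕ) = n - 1 ∧ (v.1 : ℕ) = 2 * n % 5 then k else 0) = k := by
          rw [Finset.sum_eq_single ((⟨2 * n % 5, by omega⟩ : Fin 5), (⟨n - 1, by omega⟩ : Fin n))]
          · simp
          · intro v _ hne
            rw [if_neg]
            rintro ⟨hb, ha⟩
            exact hne (Prod.ext (Fin.ext ha) (Fin.ext hb))
          · simp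
        rw [hS1, hS2, hS3]
        omega

theorem stmt2 (k n : ℕ) (hk : 1 ≤ k) (hn : 2 ≤ n) :
    gammaKR k (cylinder 5 n) ≤ n * (k + 1) + 2 * k := by
  have hRDF : IsKRDF k (cylinder 5 n) (rdfF n k) := by
    constructor
    · intro v; simp only [rdfF]; split_ifs <;> omega
    · intro v hv
      have hv0 : rdfF n k v = 0 := by
        have := hv; simp only [rdfF] at this ⊢; split_ifs at this ⊢ <;> omega
      obtain ⟨u0, hadj, hu0⟩ := exists_big_nbr n k hk hn v hv0
      exact key_s2 hk _ _ v u0 hadj hu0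
        (fun u hu => by simp only [rdfF] at hu ⊢; split_ifs at hu ⊢ <;> omega)
  have hmem : (∑ v, rdfF n k v) ∈
      {w | ∃ f : Fin 5 × Fin n → ℕ, IsKRDF k (cylinder 5 n) f ∧ w = ∑ v, f v} :=
    ⟨rdfF n k, hRDF, rfl⟩
  calc gammaKR k (cylinder 5 n) ≤ ∑ v, rdfF n k v := Nat.sInf_le hmem
    _ ≤ n * (k + 1) + 2 * k := sum_rdfF_le n k hn
end

section
/- For all integers k ≥ 1 and n ≥ 4, γ_{[k]R}(C_5 □ P_n) ≤ 5(n−2)·⌈(k+4)/5⌉ + 10·⌈(k+3−⌈(k+4)/5⌉)/3⌉, and moreover this quantity is at most (3nk + 27n + 2k − 2)/3 (equivalently, 3·γ_{[k]R}(C_5 □ P_n) ≤ 3nk + 27n + 2k − 2). -/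
open scoped Classical

lemma cyc5_adj_sub (i : Fin 5) : (SimpleGraph.cycleGraph 5).Adj i (i - 1) := by
  rw [SimpleGraph.cycleGraph_adj']; revert i; decide

lemma cyc5_adj_add (i : Fin 5) : (SimpleGraph.cycleGraph 5).Adj i (i + 1) := by
  rw [SimpleGraph.cycleGraph_adj']; revert i; decide

lemma cyc5_mem (i u : Fin 5) (h : (SimpleGraph.cycleGraph 5).Adj i u) :
    u = i - 1 ∨ u = i + 1 := by
  rw [SimpleGraph.cycleGraph_adj'] at h; revert h; revert i u; decide

lemma cyc5_distinct (i : Fin 5) : i - 1 ≠ i + 1 ∧ i - 1 ≠ i ∧ i + 1 ≠ i := by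
  revert i; decide

lemma card3 {α : Type*} [DecidableEq α] (x y z : α) : ({x, y, z} : Finset α).card ≤ 3 := by
  have h2 := Finset.card_insert_le x ({y, z} : Finset α)
  have h1 := Finset.card_insert_le y ({z} : Finset α)
  simp only [Finset.card_singleton] at *
  omega

lemma card4 {α : Type*} [DecidableEq α] (w x y z : α) :
    ({w, x, y, z} : Finset α).card ≤ 4 := by
  have h3 := Finset.card_insert_le w ({x, y, z} : Finset α)
  have := card3 x y z
  omega

lemma main_aux (k n a b : ℕ) (hn : 4 ≤ n) (ha1 : 1 ≤ a) (hb1 : 1 ≤ b)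
    (hak : a ≤ k + 1) (hbk : b ≤ k + 1)
    (h5a : k + 4 ≤ 5 * a) (h4ab : k + 4 ≤ 4 * a + b) (h3ab : k + 4 ≤ 3 * a + 2 * b)
    (h3b : k + 3 ≤ 3 * b + a) :
    gammaKR k (cylinder 5 n) ≤ 5 * (n - 2) * a + 10 * b := by
  classical
  set f : Fin 5 × Fin n → ℕ :=
    fun p => if (p.2 : ℕ) = 0 ∨ (p.2 : ℕ) = n - 1 then b else a with hf
  -- adjacency helpers
  have hadj : ∀ (v u : Fin 5 × Fin n), (cylinder 5 n).Adj v u ↔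
      ((SimpleGraph.cycleGraph 5).Adj v.1 u.1 ∧ v.2 = u.2) ∨
        ((SimpleGraph.pathGraph n).Adj v.2 u.2 ∧ v.1 = u.1) := by
    intro v u; exact SimpleGraph.boxProd_adj
  apply Nat.sInf_le
  refine ⟨f, ⟨?_, ?_⟩, ?_⟩
  · intro v
    simp only [hf]
    split <;> omega
  · rintro ⟨i, j⟩ hv
    obtain ⟨d1, d2, d3⟩ := cyc5_distinct i
    by_cases h0 : (j : ℕ) = 0 ∨ (j : ℕ) = n - 1
    -- boundary column
    · have hfj : f (i, j) = b := by simp only [hf]; rw [if_pos h0]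
      set j' : Fin n := if (j : ℕ) = 0 then ⟨1, by omega⟩ else ⟨n - 2, by omega⟩ with hj'
      have hj'case : ((j : ℕ) = 0 ∧ (j' : ℕ) = 1) ∨
          ((j : ℕ) = n - 1 ∧ (j' : ℕ) = n - 2 ∧ (j : ℕ) ≠ 0) := by
        rw [hj']; by_cases h : (j : ℕ) = 0
        · left; simp [h]
        · right; rw [if_neg h]; refine ⟨by omega, by simp, h⟩
      have hpadj : (SimpleGraph.pathGraph n).Adj j j' := by
        rw [SimpleGraph.pathGraph_adj]
        rcases hj'case with ⟨h1, h2⟩ | ⟨h1, h2, h3⟩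
        · left; omega
        · right; omega
      have hfj' : f (i, j') = a := by
        simp only [hf]; rw [if_neg]
        rcases hj'case with ⟨h1, h2⟩ | ⟨h1, h2, h3⟩ <;> omega
      have hj'ne : j' ≠ j := by
        intro h
        have := congrArg Fin.val h
        rcases hj'case with ⟨h1, h2⟩ | ⟨h1, h2, h3⟩ <;> omega
      have hpmem : ∀ u2 : Fin n, (SimpleGraph.pathGraph n).Adj j u2 → u2 = j' := by
        intro u2 hu2
        rw [SimpleGraph.pathGraph_adj] at hu2
        have hu2n : (u2 : ℕ) < n := u2.isLt
        apply Fin.ext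
        rcases hj'case with ⟨h1, h2⟩ | ⟨h1, h2, h3⟩ <;> omega
      -- anCard ≤ 3
      have han : anCard (cylinder 5 n) f (i, j) ≤ 3 := by
        refine le_trans (Finset.card_le_card ?_) (card3 (i - 1, j) (i + 1, j) (i, j'))
        intro u hu
        simp only [Finset.mem_filter, Finset.mem_univ, true_and] at hu
        rw [hadj] at hu
        simp only [Finset.mem_insert, Finset.mem_singleton]
        rcases hu.1 with ⟨hc, he⟩ | ⟨hp, he⟩
        · rcases cyc5_mem i u.1 hc with h | h
          · left; exact Prod.ext h he.symm
          · right; left; exact Prod.ext h he.symm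
        · right; right; exact Prod.ext he.symm (hpmem u.2 hp)
      -- nbhdSum ≥ 3 * b + a
      have hns : 3 * b + a ≤ nbhdSum (cylinder 5 n) f (i, j) := by
        have hsum : ∑ u ∈ ({(i - 1, j), (i + 1, j), (i, j), (i, j')} :
            Finset (Fin 5 × Fin n)), f u = 3 * b + a := by
          rw [Finset.sum_insert (by simp [d1, d2, Ne.symm hj'ne]),
            Finset.sum_insert (by simp [d3, Ne.symm hj'ne]),
            Finset.sum_insert (by simp [Ne.symm hj'ne]),
            Finset.sum_singleton]
          have hb1' : f (i - 1, j) = b := by simp only [hf]; rw [if_pos h0]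
          have hb2' : f (i + 1, j) = b := by simp only [hf]; rw [if_pos h0]
          simp only [hb1', hb2', hfj, hfj']
          omega
        unfold nbhdSum
        refine le_trans (le_of_eq hsum.symm) (Finset.sum_le_sum_of_subset ?_)
        intro u hu
        simp only [Finset.mem_insert, Finset.mem_singleton] at hu
        simp only [Finset.mem_filter, Finset.mem_univ, true_and]
        rcases hu with rfl | rfl | rfl | rfl
        · left; rw [hadj]; exact Or.inl ⟨cyc5_adj_sub i, rfl⟩
        · left; rw [hadj]; exact Or.inl ⟨cyc5_adj_add i, rfl⟩
        · right; rfl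
        · left; rw [hadj]; exact Or.inr ⟨hpadj, rfl⟩
      rw [hfj] at hv
      omega
    -- interior column
    · push_neg at h0
      obtain ⟨h00, h0n⟩ := h0
      have hjn : (j : ℕ) < n := j.isLt
      have hfj : f (i, j) = a := by simp only [hf]; rw [if_neg]; push_neg; exact ⟨h00, h0n⟩
      set jp : Fin n := ⟨(j : ℕ) - 1, by omega⟩ with hjp
      set jn : Fin n := ⟨(j : ℕ) + 1, by omega⟩ with hjn'
      have hpadjp : (SimpleGraph.pathGraph n).Adj j jp := by
        rw [SimpleGraph.pathGraph_adj]; right; simp [hjp]; omega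
      have hpadjn : (SimpleGraph.pathGraph n).Adj j jn := by
        rw [SimpleGraph.pathGraph_adj]; left; simp [hjn']
      have hpmem : ∀ u2 : Fin n, (SimpleGraph.pathGraph n).Adj j u2 → u2 = jp ∨ u2 = jn := by
        intro u2 hu2
        rw [SimpleGraph.pathGraph_adj] at hu2
        rcases hu2 with h | h
        · right; apply Fin.ext; simp [hjn']; omega
        · left; apply Fin.ext; simp [hjp]; omega
      have han : anCard (cylinder 5 n) f (i, j) ≤ 4 := by
        refine le_trans (Finset.card_le_card ?_) (card4 (i - 1, j) (i + 1, j) (i, jp) (i, jn))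
        intro u hu
        simp only [Finset.mem_filter, Finset.mem_univ, true_and] at hu
        rw [hadj] at hu
        simp only [Finset.mem_insert, Finset.mem_singleton]
        rcases hu.1 with ⟨hc, he⟩ | ⟨hp, he⟩
        · rcases cyc5_mem i u.1 hc with h | h
          · left; exact Prod.ext h he.symm
          · right; left; exact Prod.ext h he.symm
        · rcases hpmem u.2 hp with h | h
          · right; right; left; exact Prod.ext he.symm h
          · right; right; right; exact Prod.ext he.symm h
      have hfab : ∀ p : Fin 5 × Fin n, f p = a ∨ f p = b := by
        intro p; simp only [hf]; split
        · right; rfl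
        · left; rfl
      have hjpj : jp ≠ j := by intro h; have := congrArg Fin.val h; simp [hjp] at this; omega
      have hjnj : jn ≠ j := by intro h; have := congrArg Fin.val h; simp [hjn'] at this <;> omega
      have hjpjn : jp ≠ jn := by
        intro h; have := congrArg Fin.val h; simp [hjp, hjn'] at this <;> omega
      have hns : 3 * a + f (i, jp) + f (i, jn) ≤ nbhdSum (cylinder 5 n) f (i, j) := by
        have hsum : ∑ u ∈ ({(i - 1, j), (i + 1, j), (i, j), (i, jp), (i, jn)} :
            Finset (Fin 5 × Fin n)), f u = 3 * a + f (i, jp) + f (i, jn) := by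
          rw [Finset.sum_insert (by simp [d1, d2]),
            Finset.sum_insert (by simp [d3]),
            Finset.sum_insert (by simp [Ne.symm hjpj, Ne.symm hjnj]),
            Finset.sum_insert (by simp [hjpjn]),
            Finset.sum_singleton]
          have hb1' : f (i - 1, j) = a := by
            simp only [hf]; rw [if_neg]; push_neg; exact ⟨h00, h0n⟩
          have hb2' : f (i + 1, j) = a := by
            simp only [hf]; rw [if_neg]; push_neg; exact ⟨h00, h0n⟩
          simp only [hb1', hb2', hfj]
          omega
        unfold nbhdSum
        refine le_trans (le_of_eq hsum.symm) (Finset.sum_le_sum_of_subset ?_)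
        intro u hu
        simp only [Finset.mem_insert, Finset.mem_singleton] at hu
        simp only [Finset.mem_filter, Finset.mem_univ, true_and]
        rcases hu with rfl | rfl | rfl | rfl | rfl
        · left; rw [hadj]; exact Or.inl ⟨cyc5_adj_sub i, rfl⟩
        · left; rw [hadj]; exact Or.inl ⟨cyc5_adj_add i, rfl⟩
        · right; rfl
        · left; rw [hadj]; exact Or.inr ⟨hpadjp, rfl⟩
        · left; rw [hadj]; exact Or.inr ⟨hpadjn, rfl⟩
      rw [hfj] at hv
      rcases hfab (i, jp) with hp | hp <;> rcases hfab (i, jn) with hq | hq <;>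
        rw [hp, hq] at hns <;> omega
  -- weight computation
  · have hcol : ∀ i : Fin 5, ∑ j : Fin n, f (i, j) = (n - 2) * a + 2 * b := by
      intro i
      have : ∑ j : Fin n, f (i, j)
          = ∑ m ∈ Finset.range n, (if m = 0 ∨ m = n - 1 then b else a) := by
        rw [← Fin.sum_univ_eq_sum_range (fun m => if m = 0 ∨ m = n - 1 then b else a) n]
      rw [this]
      have hset : Finset.range n = insert 0 (insert (n - 1) (Finset.Ico 1 (n - 1))) := by
        ext m
        simp only [Finset.mem_range, Finset.mem_insert, Finset.mem_Ico]
        omega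
      rw [hset, Finset.sum_insert (by simp [Finset.mem_Ico] <;> omega),
          Finset.sum_insert (by simp [Finset.mem_Ico] <;> omega)]
      rw [if_pos (Or.inl rfl), if_pos (Or.inr rfl)]
      have : ∑ m ∈ Finset.Ico 1 (n - 1), (if m = 0 ∨ m = n - 1 then b else a)
          = ∑ m ∈ Finset.Ico 1 (n - 1), a := by
        refine Finset.sum_congr rfl fun m hm => ?_
        simp only [Finset.mem_Ico] at hm
        rw [if_neg]; omega
      rw [this, Finset.sum_const, Nat.card_Ico, smul_eq_mul]
      have : n - 1 - 1 = n - 2 := by omega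
      rw [this]; ring
    rw [Fintype.sum_prod_type]
    have : ∑ i : Fin 5, ∑ j : Fin n, f (i, j) = ∑ _i : Fin 5, ((n - 2) * a + 2 * b) :=
      Finset.sum_congr rfl fun i _ => hcol i
    rw [this, Finset.sum_const, Finset.card_univ, Fintype.card_fin, smul_eq_mul]
    ring

theorem stmt3 (k n : ℕ) (hk : 1 ≤ k) (hn : 4 ≤ n) :
    gammaKR k (cylinder 5 n) ≤ 5 * (n - 2) * ((k + 4) ⌈/⌉ 5) + 10 * ((k + 3 - ((k + 4) ⌈/⌉ 5)) ⌈/⌉ 3) ∧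
    3 * (5 * (n - 2) * ((k + 4) ⌈/⌉ 5) + 10 * ((k + 3 - ((k + 4) ⌈/⌉ 5)) ⌈/⌉ 3)) ≤ 3 * n * k + 27 * n + 2 * k - 2 := by
  have ea : (k + 4) ⌈/⌉ 5 = (k + 8) / 5 := by rw [Nat.ceilDiv_eq_add_pred_div]; omega
  set a := (k + 4) ⌈/⌉ 5 with ha
  have eb : (k + 3 - a) ⌈/⌉ 3 = (k + 3 - a + 2) / 3 := by rw [Nat.ceilDiv_eq_add_pred_div]; omega
  set b := (k + 3 - a) ⌈/⌉ 3 with hb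
  have ha5 : k + 4 ≤ 5 * a ∧ 5 * a ≤ k + 8 := by omega
  have hb3 : k + 3 - a ≤ 3 * b ∧ 3 * b ≤ k + 5 - a := by omega
  constructor
  · exact main_aux k n a b hn (by omega) (by omega) (by omega) (by omega) (by omega)
      (by omega) (by omega) (by omega)
  · -- arithmetic bound
    obtain ⟨m, rfl⟩ : ∃ m, n = m + 2 := ⟨n - 2, by omega⟩
    have hm2 : m + 2 - 2 = m := by omega
    rw [hm2]
    have key2 : 30 * b ≤ 8 * k + 42 := by omega
    calc 3 * (5 * m * a + 10 * b) = 3 * m * (5 * a) + 30 * b := by ring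
      _ ≤ 3 * m * (k + 8) + 30 * b :=
          Nat.add_le_add_right (Nat.mul_le_mul_left _ ha5.2) _
      _ = 3 * m * k + 24 * m + 30 * b := by ring
      _ ≤ 3 * m * k + 24 * m + (8 * k + 42) := Nat.add_le_add_left key2 _
      _ ≤ 3 * (m + 2) * k + 27 * (m + 2) + 2 * k - 2 := by
          have h : 3 * (m + 2) * k = 3 * m * k + 6 * k := by ring
          rw [h]
          omega
end

section
/- For every integer n ≥ 1, the packing number of C_5 □ P_n equals n, i.e. ρ(C_5 □ P_n) = n. -/
open scoped Classical

/-- `D` is a packing: closed neighborhoods of distinct vertices of `D` are disjoint. -/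
def IsPacking {V : Type*} (G : SimpleGraph V) (D : Finset V) : Prop :=
  ∀ u ∈ D, ∀ v ∈ D, u ≠ v → ∀ w, ¬((G.Adj u w ∨ u = w) ∧ (G.Adj v w ∨ v = w))

/-- The packing number of `G`: the maximum cardinality of a packing. -/
noncomputable def packingNumber {V : Type*} [Fintype V] (G : SimpleGraph V) : ℕ :=
  sSup {c | ∃ D : Finset V, IsPacking G D ∧ c = D.card}

lemma cyc5_common : ∀ a b : Fin 5, a ≠ b →
    ∃ c : Fin 5, ((SimpleGraph.cycleGraph 5).Adj a c ∨ a = c) ∧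
      ((SimpleGraph.cycleGraph 5).Adj b c ∨ b = c) := by decide

lemma packing_card_le {n : ℕ} (D : Finset (Fin 5 × Fin n))
    (hD : IsPacking (cylinder 5 n) D) : D.card ≤ n := by
  have hinj : Set.InjOn (fun p : Fin 5 × Fin n => p.2) D := by
    intro u hu v hv h
    by_contra hne
    have hab : u.1 ≠ v.1 := fun h1 => hne (Prod.ext h1 h)
    obtain ⟨c, hc1, hc2⟩ := cyc5_common u.1 v.1 hab
    refine hD u hu v hv hne (c, u.2) ⟨?_, ?_⟩
    · rcases hc1 with h1 | h1
      · exact Or.inl (SimpleGraph.boxProd_adj.mpr (Or.inl ⟨h1, rfl⟩))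
      · exact Or.inr (Prod.ext h1 rfl)
    · rcases hc2 with h1 | h1
      · exact Or.inl (SimpleGraph.boxProd_adj.mpr (Or.inl ⟨h1, h.symm⟩))
      · exact Or.inr (Prod.ext h1 h.symm)
  calc D.card = (D.image (fun p => p.2)).card :=
        (Finset.card_image_of_injOn hinj).symm
    _ ≤ Fintype.card (Fin n) := Finset.card_le_univ _
    _ = n := Fintype.card_fin n

/-- the cycle coordinate of the explicit packing -/
def fv (j : ℕ) : Fin 5 := ⟨2 * j % 5, by omega⟩

lemma helper {n : ℕ} (j k : Fin n) (hlt : j.val < k.val) (w : Fin 5 × Fin n) :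
    ¬(((cylinder 5 n).Adj (fv j.val, j) w ∨ (fv j.val, j) = w) ∧
      ((cylinder 5 n).Adj (fv k.val, k) w ∨ (fv k.val, k) = w)) := by
  obtain ⟨c, l⟩ := w
  rintro ⟨h1, h2⟩
  have hc := c.isLt
  have hj := j.isLt
  have hk := k.isLt
  have hl := l.isLt
  simp only [cylinder, SimpleGraph.boxProd_adj, SimpleGraph.pathGraph_adj,
    SimpleGraph.cycleGraph_adj', Fin.sub_def, Prod.mk.injEq, Fin.ext_iff, fv] at h1 h2
  omega

theorem stmt4 (n : ℕ) (hn : 1 ≤ n) :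
    packingNumber (cylinder 5 n) = n := by
  have hub : ∀ c ∈ {c | ∃ D : Finset (Fin 5 × Fin n),
      IsPacking (cylinder 5 n) D ∧ c = D.card}, c ≤ n := by
    rintro c ⟨D, hD, rfl⟩
    exact packing_card_le D hD
  have hmem : n ∈ {c | ∃ D : Finset (Fin 5 × Fin n),
      IsPacking (cylinder 5 n) D ∧ c = D.card} := by
    refine ⟨Finset.univ.image (fun j : Fin n => (fv j.val, j)), ?_, ?_⟩
    · intro u hu v hv hne w
      simp only [Finset.mem_image, Finset.mem_univ, true_and] at hu hv
      obtain ⟨j, rfl⟩ := hu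
      obtain ⟨k, rfl⟩ := hv
      have hjk : j ≠ k := fun h => hne (by rw [h])
      rcases lt_or_gt_of_ne (fun h : j.val = k.val => hjk (Fin.ext h)) with h | h
      · exact helper j k h w
      · exact fun hc => helper k j h w ⟨hc.2, hc.1⟩
    · rw [Finset.card_image_of_injective _ (fun a b h => congrArg Prod.snd h),
        Finset.card_univ, Fintype.card_fin]
  refine le_antisymm (csSup_le ⟨n, hmem⟩ hub) (le_csSup ⟨n, hub⟩ hmem)
end

section
/- For all integers k ≥ 1 and n ≥ 2, γ_{[k]R}(C_6 □ P_n) ≤ ⌈4n/3⌉·(k+1) + c(n), where c(n) = k+1 if n ≡ 0 (mod 3), c(n) = 0 if n ≡ 1 (mod 3), and c(n) = k if n ≡ 2 (mod 3). -/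
open scoped Classical

namespace Stmt7Aux

/-- Column pattern with period 6: which cycle positions get label `k+1`
in a column whose index is `≡ r (mod 6)`. -/
def inPat (r i : ℕ) : Bool :=
  match r with
  | 0 => i = 1 || i = 5
  | 1 => i = 3
  | 2 => i = 0
  | 3 => i = 2 || i = 4
  | 4 => i = 0
  | _ => i = 3

/-- Cycle position of the special extra vertex in the last column. -/
def spec (n : ℕ) : ℕ := if n % 6 = 0 ∨ n % 6 = 2 then 0 else 3

/-- Value of the special extra vertex. -/
def eps (k n : ℕ) : ℕ := if n % 3 = 0 then k + 1 else if n % 3 = 1 then 0 else k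

/-- The labelling, as a function of natural-number coordinates. -/
def F (k n i j : ℕ) : ℕ :=
  if inPat (j % 6) i then k + 1
  else if j = n - 1 ∧ i = spec n then eps k n else 0

lemma F_pat {k n i j : ℕ} (h : inPat (j % 6) i = true) : F k n i j = k + 1 := by
  simp [F, h]

lemma F_pat' {k n : ℕ} {i j : ℕ} (r : ℕ) (hr : j % 6 = r) (h : inPat r i = true) :
    F k n i j = k + 1 := by
  apply F_pat; rw [hr]; exact h

lemma spec_eq_zero {n : ℕ} (h : n % 6 = 0 ∨ n % 6 = 2) : spec n = 0 := if_pos h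

lemma spec_eq_three {n : ℕ} (h : ¬(n % 6 = 0 ∨ n % 6 = 2)) : spec n = 3 := if_neg h

lemma F_spec {k n i j : ℕ} (hp : inPat (j % 6) i = false) (hj : j = n - 1)
    (hi : i = spec n) : F k n i j = eps k n := by
  subst hj; subst hi; simp [F, hp]

lemma eps_le {k n : ℕ} : eps k n ≤ k + 1 := by
  unfold eps; split <;> [skip; split] <;> omega

lemma F_le {k n i j : ℕ} : F k n i j ≤ k + 1 := by
  unfold F; split
  · exact le_refl _
  · split
    · exact eps_le
    · omega

lemma F_lt_eq_zero {k n i j : ℕ} (h : F k n i j < k) : F k n i j = 0 := by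
  unfold F at h ⊢; split_ifs at h ⊢ with h1 h2
  · omega
  · unfold eps at h ⊢; split_ifs at h ⊢ <;> omega
  · rfl

section Adj

lemma adj_col {n : ℕ} (i i' : Fin 6) (j : Fin n)
    (h : (SimpleGraph.cycleGraph 6).Adj i i') : (cylinder 6 n).Adj (i, j) (i', j) :=
  Or.inl ⟨h, rfl⟩

lemma adj_right {n : ℕ} (i : Fin 6) (j : Fin n) (h : (j : ℕ) + 1 < n) :
    (cylinder 6 n).Adj (i, j) (i, ⟨(j : ℕ) + 1, h⟩) :=
  Or.inr ⟨SimpleGraph.pathGraph_adj.mpr (Or.inl rfl), rfl⟩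

lemma adj_left {n : ℕ} (i : Fin 6) (j : Fin n) (h : 0 < (j : ℕ)) :
    (cylinder 6 n).Adj (i, j) (i, ⟨(j : ℕ) - 1, by omega⟩) :=
  Or.inr ⟨SimpleGraph.pathGraph_adj.mpr (Or.inr (by simp; omega)), rfl⟩

end Adj

/-- Every vertex labelled `0` has a neighbor labelled `k+1`. -/
lemma dom {k n : ℕ} (hk : 1 ≤ k) (hn : 2 ≤ n) (i : Fin 6) (j : Fin n)
    (h0 : F k n i.val j.val = 0) :
    ∃ u : Fin 6 × Fin n, (cylinder 6 n).Adj (i, j) u ∧ F k n u.1.val u.2.val = k + 1 := by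
  have hjn : (j : ℕ) < n := j.isLt
  have hp : inPat ((j : ℕ) % 6) (i : ℕ) = false := by
    by_contra h
    rw [F_pat (by simpa using h)] at h0; omega
  have hr6 : (j : ℕ) % 6 = 0 ∨ (j : ℕ) % 6 = 1 ∨ (j : ℕ) % 6 = 2 ∨ (j : ℕ) % 6 = 3 ∨
      (j : ℕ) % 6 = 4 ∨ (j : ℕ) % 6 = 5 := by omega
  rcases hr6 with hr | hr | hr | hr | hr | hr <;> fin_cases i
  -- r = 0, pattern {1,5}
  · exact ⟨_, adj_col _ 1 j (by decide), F_pat' 0 hr rfl⟩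
  · rw [hr] at hp; exact absurd hp (by decide)
  · exact ⟨_, adj_col _ 1 j (by decide), F_pat' 0 hr rfl⟩
  · by_cases hlast : (j : ℕ) + 1 < n
    · exact ⟨_, adj_right _ j hlast,
        F_pat' 1 (show ((j : ℕ) + 1) % 6 = 1 by omega) rfl⟩
    · exact ⟨_, adj_left _ j (by omega),
        F_pat' 5 (show ((j : ℕ) - 1) % 6 = 5 by omega) rfl⟩
  · exact ⟨_, adj_col _ 5 j (by decide), F_pat' 0 hr rfl⟩
  · rw [hr] at hp; exact absurd hp (by decide)
  -- r = 1, pattern {3}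
  · by_cases hlast : (j : ℕ) + 1 < n
    · exact ⟨_, adj_right _ j hlast,
        F_pat' 2 (show ((j : ℕ) + 1) % 6 = 2 by omega) rfl⟩
    · exfalso
      have hn6 : n % 6 = 2 := by omega
      rw [F_spec hp (by omega) (by rw [spec_eq_zero (by omega)])] at h0
      unfold eps at h0
      rw [if_neg (by omega), if_neg (by omega)] at h0
      omega
  · exact ⟨_, adj_left _ j (by omega),
      F_pat' 0 (show ((j : ℕ) - 1) % 6 = 0 by omega) rfl⟩
  · exact ⟨_, adj_col _ 3 j (by decide), F_pat' 1 hr rfl⟩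
  · rw [hr] at hp; exact absurd hp (by decide)
  · exact ⟨_, adj_col _ 3 j (by decide), F_pat' 1 hr rfl⟩
  · exact ⟨_, adj_left _ j (by omega),
      F_pat' 0 (show ((j : ℕ) - 1) % 6 = 0 by omega) rfl⟩
  -- r = 2, pattern {0}
  · rw [hr] at hp; exact absurd hp (by decide)
  · exact ⟨_, adj_col _ 0 j (by decide), F_pat' 2 hr rfl⟩
  · by_cases hlast : (j : ℕ) + 1 < n
    · exact ⟨_, adj_right _ j hlast,
        F_pat' 3 (show ((j : ℕ) + 1) % 6 = 3 by omega) rfl⟩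
    · refine ⟨_, adj_col _ 3 j (by decide), ?_⟩
      have hn6 : n % 6 = 3 := by omega
      rw [F_spec (show inPat ((j : ℕ) % 6) ((3 : Fin 6) : ℕ) = false by rw [hr]; decide)
        (by omega) (by rw [spec_eq_three (by omega)]; rfl)]
      unfold eps; rw [if_pos (by omega)]
  · exact ⟨_, adj_left _ j (by omega),
      F_pat' 1 (show ((j : ℕ) - 1) % 6 = 1 by omega) rfl⟩
  · by_cases hlast : (j : ℕ) + 1 < n
    · exact ⟨_, adj_right _ j hlast,
        F_pat' 3 (show ((j : ℕ) + 1) % 6 = 3 by omega) rfl⟩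
    · refine ⟨_, adj_col _ 3 j (by decide), ?_⟩
      have hn6 : n % 6 = 3 := by omega
      rw [F_spec (show inPat ((j : ℕ) % 6) ((3 : Fin 6) : ℕ) = false by rw [hr]; decide)
        (by omega) (by rw [spec_eq_three (by omega)]; rfl)]
      unfold eps; rw [if_pos (by omega)]
  · exact ⟨_, adj_col _ 0 j (by decide), F_pat' 2 hr rfl⟩
  -- r = 3, pattern {2,4}
  · exact ⟨_, adj_left _ j (by omega),
      F_pat' 2 (show ((j : ℕ) - 1) % 6 = 2 by omega) rfl⟩
  · exact ⟨_, adj_col _ 2 j (by decide), F_pat' 3 hr rfl⟩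
  · rw [hr] at hp; exact absurd hp (by decide)
  · exact ⟨_, adj_col _ 2 j (by decide), F_pat' 3 hr rfl⟩
  · rw [hr] at hp; exact absurd hp (by decide)
  · exact ⟨_, adj_col _ 4 j (by decide), F_pat' 3 hr rfl⟩
  -- r = 4, pattern {0}
  · rw [hr] at hp; exact absurd hp (by decide)
  · exact ⟨_, adj_col _ 0 j (by decide), F_pat' 4 hr rfl⟩
  · exact ⟨_, adj_left _ j (by omega),
      F_pat' 3 (show ((j : ℕ) - 1) % 6 = 3 by omega) rfl⟩
  · by_cases hlast : (j : ℕ) + 1 < n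
    · exact ⟨_, adj_right _ j hlast,
        F_pat' 5 (show ((j : ℕ) + 1) % 6 = 5 by omega) rfl⟩
    · exfalso
      have hn6 : n % 6 = 5 := by omega
      rw [F_spec hp (by omega) (by rw [spec_eq_three (by omega)])] at h0
      unfold eps at h0
      rw [if_neg (by omega), if_neg (by omega)] at h0
      omega
  · exact ⟨_, adj_left _ j (by omega),
      F_pat' 3 (show ((j : ℕ) - 1) % 6 = 3 by omega) rfl⟩
  · exact ⟨_, adj_col _ 0 j (by decide), F_pat' 4 hr rfl⟩
  -- r = 5, pattern {3}
  · exact ⟨_, adj_left _ j (by omega),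
      F_pat' 4 (show ((j : ℕ) - 1) % 6 = 4 by omega) rfl⟩
  · by_cases hlast : (j : ℕ) + 1 < n
    · exact ⟨_, adj_right _ j hlast,
        F_pat' 0 (show ((j : ℕ) + 1) % 6 = 0 by omega) rfl⟩
    · refine ⟨_, adj_col _ 0 j (by decide), ?_⟩
      have hn6 : n % 6 = 0 := by omega
      rw [F_spec (show inPat ((j : ℕ) % 6) ((0 : Fin 6) : ℕ) = false by rw [hr]; decide)
        (by omega) (by rw [spec_eq_zero (by omega)]; rfl)]
      unfold eps; rw [if_pos (by omega)]
  · exact ⟨_, adj_col _ 3 j (by decide), F_pat' 5 hr rfl⟩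
  · rw [hr] at hp; exact absurd hp (by decide)
  · exact ⟨_, adj_col _ 3 j (by decide), F_pat' 5 hr rfl⟩
  · by_cases hlast : (j : ℕ) + 1 < n
    · exact ⟨_, adj_right _ j hlast,
        F_pat' 0 (show ((j : ℕ) + 1) % 6 = 0 by omega) rfl⟩
    · refine ⟨_, adj_col _ 0 j (by decide), ?_⟩
      have hn6 : n % 6 = 0 := by omega
      rw [F_spec (show inPat ((j : ℕ) % 6) ((0 : Fin 6) : ℕ) = false by rw [hr]; decide)
        (by omega) (by rw [spec_eq_zero (by omega)]; rfl)]
      unfold eps; rw [if_pos (by omega)]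

lemma F_out {k n i j : ℕ} (r : ℕ) (hr : j % 6 = r) (hp : inPat r i = false)
    (hns : ¬(j = n - 1 ∧ i = spec n)) : F k n i j = 0 := by
  unfold F; rw [hr, hp]; simp [hns]

/-- Lemma A: a vertex with a neighbor of weight at least `k+1` satisfies
the `[k]`-Roman condition. -/
lemma lemA {V : Type*} [Fintype V] (k : ℕ) (G : SimpleGraph V) (f : V → ℕ) {v u : V}
    (hadj : G.Adj v u) (hu : k + 1 ≤ f u) : k + anCard G f v ≤ nbhdSum G f v := by
  classical
  set A := Finset.univ.filter (fun x => G.Adj v x ∧ 0 < f x) with hA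
  have huA : u ∈ A := by simp only [hA, Finset.mem_filter, Finset.mem_univ, true_and]
                         exact ⟨hadj, by omega⟩
  have h1 : ∑ x ∈ A, f x ≤ nbhdSum G f v := by
    apply Finset.sum_le_sum_of_subset
    intro x hx
    simp only [hA, Finset.mem_filter, Finset.mem_univ, true_and] at hx ⊢
    exact Or.inl hx.1
  have h2 : (A.erase u).card • 1 ≤ ∑ x ∈ A.erase u, f x := by
    apply Finset.card_nsmul_le_sum
    intro x hx
    have hx' := Finset.mem_of_mem_erase hx
    simp only [hA, Finset.mem_filter, Finset.mem_univ, true_and] at hx'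
    omega
  have h3 : ∑ x ∈ A.erase u, f x + f u = ∑ x ∈ A, f x := Finset.sum_erase_add A f huA
  have h4 : A.card = (A.erase u).card + 1 := by
    rw [Finset.card_erase_of_mem huA]
    have : 0 < A.card := Finset.card_pos.mpr ⟨u, huA⟩
    omega
  have h5 : anCard G f v = A.card := by rw [anCard, hA]
  simp only [smul_eq_mul, mul_one] at h2
  omega

/-- The running count of the pattern. -/
lemma Tsum : ∀ m : ℕ, (∑ j ∈ Finset.range m, (if j % 3 = 0 then 2 else 1)) = (4 * m + 2) / 3 := by
  intro m
  induction m with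
  | zero => simp
  | succ p ih =>
    rw [Finset.sum_range_succ, ih]
    by_cases h : p % 3 = 0
    · rw [if_pos h]; omega
    · rw [if_neg h]
      have h3 : p % 3 = 1 ∨ p % 3 = 2 := by omega
      rcases h3 with h3 | h3 <;> omega

/-- Column sums. -/
lemma colsum {k n : ℕ} (hn : 2 ≤ n) (j : ℕ) (hj : j < n) :
    F k n 0 j + F k n 1 j + F k n 2 j + F k n 3 j + F k n 4 j + F k n 5 j
      = (k + 1) * (if j % 3 = 0 then 2 else 1) + (if j = n - 1 then eps k n else 0) := by
  have hr6 : j % 6 = 0 ∨ j % 6 = 1 ∨ j % 6 = 2 ∨ j % 6 = 3 ∨ j % 6 = 4 ∨ j % 6 = 5 := by omega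
  by_cases hl : j = n - 1
  · have hn6 : n % 6 = (j % 6 + 1) % 6 := by omega
    rw [if_pos hl]
    rcases hr6 with hr | hr | hr | hr | hr | hr
    · have hs : spec n = 3 := spec_eq_three (by omega)
      rw [F_out (i := 0) 0 hr rfl (by omega), F_pat' (i := 1) 0 hr rfl, F_out (i := 2) 0 hr rfl (by omega), F_spec (j := j) (i := 3) (by rw [hr]; rfl) hl hs.symm, F_out (i := 4) 0 hr rfl (by omega), F_pat' (i := 5) 0 hr rfl, if_pos (by omega)]
      ring
    · have hs : spec n = 0 := spec_eq_zero (by omega)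
      rw [F_spec (j := j) (i := 0) (by rw [hr]; rfl) hl hs.symm, F_out (i := 1) 1 hr rfl (by omega), F_out (i := 2) 1 hr rfl (by omega), F_pat' (i := 3) 1 hr rfl, F_out (i := 4) 1 hr rfl (by omega), F_out (i := 5) 1 hr rfl (by omega), if_neg (by omega)]
      ring
    · have hs : spec n = 3 := spec_eq_three (by omega)
      rw [F_pat' (i := 0) 2 hr rfl, F_out (i := 1) 2 hr rfl (by omega), F_out (i := 2) 2 hr rfl (by omega), F_spec (j := j) (i := 3) (by rw [hr]; rfl) hl hs.symm, F_out (i := 4) 2 hr rfl (by omega), F_out (i := 5) 2 hr rfl (by omega), if_neg (by omega)]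
      ring
    · have hs : spec n = 3 := spec_eq_three (by omega)
      rw [F_out (i := 0) 3 hr rfl (by omega), F_out (i := 1) 3 hr rfl (by omega), F_pat' (i := 2) 3 hr rfl, F_spec (j := j) (i := 3) (by rw [hr]; rfl) hl hs.symm, F_pat' (i := 4) 3 hr rfl, F_out (i := 5) 3 hr rfl (by omega), if_pos (by omega)]
      ring
    · have hs : spec n = 3 := spec_eq_three (by omega)
      rw [F_pat' (i := 0) 4 hr rfl, F_out (i := 1) 4 hr rfl (by omega), F_out (i := 2) 4 hr rfl (by omega), F_spec (j := j) (i := 3) (by rw [hr]; rfl) hl hs.symm, F_out (i := 4) 4 hr rfl (by omega), F_out (i := 5) 4 hr rfl (by omega), if_neg (by omega)]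
      ring
    · have hs : spec n = 0 := spec_eq_zero (by omega)
      rw [F_spec (j := j) (i := 0) (by rw [hr]; rfl) hl hs.symm, F_out (i := 1) 5 hr rfl (by omega), F_out (i := 2) 5 hr rfl (by omega), F_pat' (i := 3) 5 hr rfl, F_out (i := 4) 5 hr rfl (by omega), F_out (i := 5) 5 hr rfl (by omega), if_neg (by omega)]
      ring
  · rw [if_neg hl]
    have hns : ∀ i : ℕ, ¬(j = n - 1 ∧ i = spec n) := fun i h => hl h.1
    rcases hr6 with hr | hr | hr | hr | hr | hr
    · rw [F_out (i := 0) 0 hr rfl (hns 0), F_pat' (i := 1) 0 hr rfl, F_out (i := 2) 0 hr rfl (hns 2), F_out (i := 3) 0 hr rfl (hns 3), F_out (i := 4) 0 hr rfl (hns 4), F_pat' (i := 5) 0 hr rfl, if_pos (by omega)]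
      ring
    · rw [F_out (i := 0) 1 hr rfl (hns 0), F_out (i := 1) 1 hr rfl (hns 1), F_out (i := 2) 1 hr rfl (hns 2), F_pat' (i := 3) 1 hr rfl, F_out (i := 4) 1 hr rfl (hns 4), F_out (i := 5) 1 hr rfl (hns 5), if_neg (by omega)]
      ring
    · rw [F_pat' (i := 0) 2 hr rfl, F_out (i := 1) 2 hr rfl (hns 1), F_out (i := 2) 2 hr rfl (hns 2), F_out (i := 3) 2 hr rfl (hns 3), F_out (i := 4) 2 hr rfl (hns 4), F_out (i := 5) 2 hr rfl (hns 5), if_neg (by omega)]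
      ring
    · rw [F_out (i := 0) 3 hr rfl (hns 0), F_out (i := 1) 3 hr rfl (hns 1), F_pat' (i := 2) 3 hr rfl, F_out (i := 3) 3 hr rfl (hns 3), F_pat' (i := 4) 3 hr rfl, F_out (i := 5) 3 hr rfl (hns 5), if_pos (by omega)]
      ring
    · rw [F_pat' (i := 0) 4 hr rfl, F_out (i := 1) 4 hr rfl (hns 1), F_out (i := 2) 4 hr rfl (hns 2), F_out (i := 3) 4 hr rfl (hns 3), F_out (i := 4) 4 hr rfl (hns 4), F_out (i := 5) 4 hr rfl (hns 5), if_neg (by omega)]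
      ring
    · rw [F_out (i := 0) 5 hr rfl (hns 0), F_out (i := 1) 5 hr rfl (hns 1), F_out (i := 2) 5 hr rfl (hns 2), F_pat' (i := 3) 5 hr rfl, F_out (i := 4) 5 hr rfl (hns 4), F_out (i := 5) 5 hr rfl (hns 5), if_neg (by omega)]
      ring

end Stmt7Aux

theorem stmt7 (k n : ℕ) (hk : 1 ≤ k) (hn : 2 ≤ n) :
    gammaKR k (cylinder 6 n) ≤
      ((4 * n) ⌈/⌉ 3) * (k + 1) +
        (if n % 3 = 0 then k + 1 else if n % 3 = 1 then 0 else k) := by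
  classical
  set f : Fin 6 × Fin n → ℕ := fun v => Stmt7Aux.F k n v.1.val v.2.val with hf
  have hrdf : IsKRDF k (cylinder 6 n) f := by
    constructor
    · intro v; exact Stmt7Aux.F_le
    · intro v hv
      have h0 : f v = 0 := Stmt7Aux.F_lt_eq_zero hv
      obtain ⟨u, hadj, hu⟩ := Stmt7Aux.dom hk hn v.1 v.2 h0
      exact Stmt7Aux.lemA k _ f hadj (le_of_eq hu.symm)
  have hmem : gammaKR k (cylinder 6 n) ≤ ∑ v, f v := Nat.sInf_le ⟨f, hrdf, rfl⟩
  have hcol : ∀ j : Fin n, (∑ i : Fin 6, Stmt7Aux.F k n i.val j.val) =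
      (k + 1) * (if (j : ℕ) % 3 = 0 then 2 else 1) +
        (if (j : ℕ) = n - 1 then Stmt7Aux.eps k n else 0) := by
    intro j
    rw [Fin.sum_univ_six]
    exact Stmt7Aux.colsum hn (j : ℕ) j.isLt
  have hsum : ∑ v, f v = (k + 1) * ((4 * n + 2) / 3) + Stmt7Aux.eps k n := by
    rw [hf]
    rw [Fintype.sum_prod_type, Finset.sum_comm]
    calc ∑ j : Fin n, ∑ i : Fin 6, Stmt7Aux.F k n i.val j.val
        = ∑ j : Fin n, ((k + 1) * (if (j : ℕ) % 3 = 0 then 2 else 1) +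
            (if (j : ℕ) = n - 1 then Stmt7Aux.eps k n else 0)) := by
          exact Finset.sum_congr rfl fun j _ => hcol j
      _ = ∑ j ∈ Finset.range n, ((k + 1) * (if j % 3 = 0 then 2 else 1) +
            (if j = n - 1 then Stmt7Aux.eps k n else 0)) := by
          exact Fin.sum_univ_eq_sum_range
            (fun j => (k + 1) * (if j % 3 = 0 then 2 else 1) +
              (if j = n - 1 then Stmt7Aux.eps k n else 0)) n
      _ = (k + 1) * ((4 * n + 2) / 3) + Stmt7Aux.eps k n := by
          rw [Finset.sum_add_distrib, ← Finset.mul_sum, Stmt7Aux.Tsum,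
            Finset.sum_ite_eq' (Finset.range n) (n - 1) (fun _ => Stmt7Aux.eps k n),
            if_pos (Finset.mem_range.mpr (by omega))]
  have hceil : (4 * n) ⌈/⌉ 3 = (4 * n + 2) / 3 := by
    rw [Nat.ceilDiv_eq_add_pred_div]
    omega
  have heps : Stmt7Aux.eps k n =
      (if n % 3 = 0 then k + 1 else if n % 3 = 1 then 0 else k) := rfl
  rw [hceil, ← heps, mul_comm]
  omega
end

section
/- For all integers k ≥ 1 and n ≥ 4, γ_{[k]R}(C_6 □ P_n) ≤ 6(n−2)·⌈(k+5)/5⌉ + 12·⌈(k+3−⌈(k+5)/5⌉)/3⌉ − 2⌈n/2⌉. -/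
open scoped Classical

/-!
Label the vertex `(i, j)` of `C₆ □ Pₙ` through its residue `i + 3j` mod 6, read in the periodic
pattern `z z p q q p`, with `z = 0` in the inner columns and a separate triple `(a, b, c)` in the
two end columns. A step along the path shifts the residue by `3`, so each vertex sees one of
finitely many combinations of the five labels, and the `[k]`-Roman condition becomes a short list
of linear inequalities in `p, q, a, b, c`. They hold for `p = ⌈(k+5)/5⌉`, `q = min (2p-1) (k+1)`
and a suitable end triple with `a + b + c ≤ 3⌈(k+3-p)/3⌉`. An inner column then weighs at most
`6p - 2`, and the `2(n-2)` so saved is at least `2⌈n/2⌉` because `n ≥ 4`.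
-/

open Finset

namespace SimpleGraph

variable {V : Type*} [Fintype V] (G : SimpleGraph V) (f : V → ℕ)

lemma nbhdSum_eq_add_sum_neighborFinset (v : V) :
    nbhdSum G f v = f v + ∑ u ∈ G.neighborFinset v, f u := by
  have : univ.filter (fun u => G.Adj v u ∨ u = v) = insert v (G.neighborFinset v) := by
    ext u; simp [or_comm]
  rw [nbhdSum, this, sum_insert (by simp)]

lemma anCard_eq_card_filter_neighborFinset (v : V) :
    anCard G f v = #{u ∈ G.neighborFinset v | 0 < f u} := by
  rw [anCard]; congr 1; ext u; simp

/-- In `ℕ`, `f u - 1` is `f u` minus the indicator of `u` being active. -/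
lemma nbhdSum_eq_add_anCard_add_sum_pred (v : V) :
    nbhdSum G f v = f v + anCard G f v + ∑ u ∈ G.neighborFinset v, (f u - 1) := by
  rw [nbhdSum_eq_add_sum_neighborFinset, anCard_eq_card_filter_neighborFinset, card_filter,
    add_assoc, ← sum_add_distrib]
  congr 1
  refine sum_congr rfl fun u _ => ?_
  split_ifs <;> omega

lemma isKRDF_of_le_add_sum_pred {k : ℕ} (hle : ∀ v, f v ≤ k + 1)
    (hdom : ∀ v, k ≤ f v + ∑ u ∈ G.neighborFinset v, (f u - 1)) : IsKRDF k G f :=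
  ⟨hle, fun v _ => by have := hdom v; rw [nbhdSum_eq_add_anCard_add_sum_pred]; omega⟩

lemma gammaKR_le_sum {k : ℕ} (hf : IsKRDF k G f) : gammaKR k G ≤ ∑ v, f v :=
  Nat.sInf_le ⟨f, hf, rfl⟩

lemma le_sum_neighborFinset {v a : V} (ha : G.Adj v a) : f a ≤ ∑ u ∈ G.neighborFinset v, f u :=
  single_le_sum (fun _ _ => Nat.zero_le _) (by simpa using ha)

lemma add_le_sum_neighborFinset {v a b : V} (ha : G.Adj v a) (hb : G.Adj v b) (hab : a ≠ b) :
    f a + f b ≤ ∑ u ∈ G.neighborFinset v, f u := by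
  rw [← sum_pair hab]
  exact sum_le_sum_of_subset (by simp [insert_subset_iff, ha, hb])

lemma sum_neighborFinset_boxProd {W : Type*} (H : SimpleGraph W) (g : V × W → ℕ) (x : V × W)
    [Fintype (H.neighborSet x.2)] [Fintype ((G □ H).neighborSet x)] :
    ∑ u ∈ (G □ H).neighborFinset x, g u =
      ∑ a ∈ G.neighborFinset x.1, g (a, x.2) + ∑ b ∈ H.neighborFinset x.2, g (x.1, b) := by
  rw [neighborFinset_boxProd, sum_disjUnion, sum_product, sum_product]
  simp

end SimpleGraph

def sixPattern (z p q : ℕ) : Fin 6 → ℕ := ![z, z, p, q, q, p]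

lemma sum_sixPattern_add (z p q : ℕ) (t : Fin 6) :
    ∑ i, sixPattern z p q (i + t) = 2 * (z + p + q) := by
  rw [show ∑ i, sixPattern z p q (i + t) = ∑ i, sixPattern z p q i from
    Equiv.sum_comp (Equiv.addRight t) _, Fin.sum_univ_six]
  simp [sixPattern]
  ring

lemma sixPattern_le {z p q m : ℕ} (hz : z ≤ m) (hp : p ≤ m) (hq : q ≤ m) (x : Fin 6) :
    sixPattern z p q x ≤ m := by
  fin_cases x <;> simp [sixPattern] <;> omega

def columnPattern (n p q a b c : ℕ) (j : Fin n) : Fin 6 → ℕ :=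
  if j.val = 0 ∨ j.val = n - 1 then sixPattern a b c else sixPattern 0 p q

def cylinderLabel (n p q a b c : ℕ) (v : Fin 6 × Fin n) : ℕ :=
  columnPattern n p q a b c v.2 (v.1 + Fin.ofNat 6 (3 * v.2.val))

section LocalConditions

variable {k p q a b c : ℕ}

/-- The terms are the vertex, its two cycle neighbours, and its one neighbour along the path. -/
lemma le_excess_boundary_column (h₀ : k + 3 ≤ 2 * a + b + q) (h₂ : k + 3 ≤ a + b + c + p)
    (h₃ : k + 2 ≤ b + 2 * c) (x : Fin 6) :
    k ≤ sixPattern a b c x + (sixPattern a b c (x - 1) - 1 + (sixPattern a b c (x + 1) - 1)) +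
      (sixPattern 0 p q (x + 3) - 1) := by
  fin_cases x <;> simp [sixPattern] <;> omega

/-- One neighbouring column is inner, the other may be an end column: hence the `min`. -/
lemma le_excess_interior_column (hz : k + 3 ≤ p + 2 * q) (hp : k + 3 ≤ 3 * p + q)
    (hzb : k + 3 ≤ p + q + c) (hpb : k + 3 ≤ 2 * p + q + b) (x : Fin 6) :
    k ≤ sixPattern 0 p q x + (sixPattern 0 p q (x - 1) - 1 + (sixPattern 0 p q (x + 1) - 1)) +
      (sixPattern 0 p q (x + 3) - 1 +
        min (sixPattern 0 p q (x + 3) - 1) (sixPattern a b c (x + 3) - 1)) := by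
  fin_cases x <;> simp [sixPattern] <;> omega

end LocalConditions

section Cylinder

variable {n : ℕ} (p q a b c : ℕ)

lemma sum_cylinderLabel (hn : 2 ≤ n) :
    ∑ v, cylinderLabel n p q a b c v = 2 * (2 * (a + b + c)) + (n - 2) * (2 * (p + q)) := by
  have hcol : ∀ j : Fin n, ∑ i, cylinderLabel n p q a b c (i, j) =
      if j.val = 0 ∨ j.val = n - 1 then 2 * (a + b + c) else 2 * (p + q) := by
    intro j
    simp only [cylinderLabel, columnPattern]
    split_ifs <;> simp [sum_sixPattern_add]
  obtain ⟨m, rfl⟩ : ∃ m, n = m + 2 := ⟨n - 2, by omega⟩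
  rw [Fintype.sum_prod_type_right, sum_congr rfl fun j _ => hcol j, Fin.sum_univ_succ,
    Fin.sum_univ_castSucc]
  simp [fun x : Fin m => x.isLt.ne]
  ring

lemma ofNat_three_mul_of_adj {j j' : Fin n} (h : (SimpleGraph.pathGraph n).Adj j j') :
    Fin.ofNat 6 (3 * j'.val) = Fin.ofNat 6 (3 * j.val) + 3 := by
  rw [SimpleGraph.pathGraph_adj] at h
  ext
  simp only [Fin.val_ofNat, Fin.val_add]
  omega

lemma columnPattern_of_boundary {j : Fin n} (hj : j.val = 0 ∨ j.val = n - 1) :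
    columnPattern n p q a b c j = sixPattern a b c :=
  if_pos hj

lemma columnPattern_of_interior {j : Fin n} (hj : ¬(j.val = 0 ∨ j.val = n - 1)) :
    columnPattern n p q a b c j = sixPattern 0 p q :=
  if_neg hj

lemma le_sum_columnPattern_of_boundary (hn : 4 ≤ n) {j : Fin n} (hj : j.val = 0 ∨ j.val = n - 1)
    (y : Fin 6) :
    sixPattern 0 p q y - 1 ≤
      ∑ j' ∈ (SimpleGraph.pathGraph n).neighborFinset j, (columnPattern n p q a b c j' y - 1) := by
  obtain ⟨j', hadj, hj'⟩ : ∃ j' : Fin n, (SimpleGraph.pathGraph n).Adj j j' ∧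
      ¬(j'.val = 0 ∨ j'.val = n - 1) := by
    rcases hj with hj | hj
    · exact ⟨⟨1, by omega⟩, by simp [SimpleGraph.pathGraph_adj]; omega, by simp; omega⟩
    · exact ⟨⟨n - 2, by omega⟩, by simp [SimpleGraph.pathGraph_adj]; omega, by simp; omega⟩
  calc sixPattern 0 p q y - 1 = columnPattern n p q a b c j' y - 1 := by
        rw [columnPattern_of_interior p q a b c hj']
    _ ≤ _ := SimpleGraph.le_sum_neighborFinset _ (fun j' => columnPattern n p q a b c j' y - 1) hadj

lemma le_sum_columnPattern_of_interior (hn : 4 ≤ n) {j : Fin n}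
    (hj : ¬(j.val = 0 ∨ j.val = n - 1)) (y : Fin 6) :
    sixPattern 0 p q y - 1 + min (sixPattern 0 p q y - 1) (sixPattern a b c y - 1) ≤
      ∑ j' ∈ (SimpleGraph.pathGraph n).neighborFinset j, (columnPattern n p q a b c j' y - 1) := by
  let below : Fin n := ⟨j.val - 1, by omega⟩
  let above : Fin n := ⟨j.val + 1, by omega⟩
  have h₁ : (SimpleGraph.pathGraph n).Adj j below := by
    simp [SimpleGraph.pathGraph_adj, below]; omega
  have h₂ : (SimpleGraph.pathGraph n).Adj j above := by simp [SimpleGraph.pathGraph_adj, above]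
  have hne : below ≠ above := by simp [below, above, Fin.ext_iff]
  refine le_trans ?_ (SimpleGraph.add_le_sum_neighborFinset _
    (fun j' => columnPattern n p q a b c j' y - 1) h₁ h₂ hne)
  have hmin : ∀ j', min (sixPattern 0 p q y - 1) (sixPattern a b c y - 1) ≤
      columnPattern n p q a b c j' y - 1 := by
    intro j'; unfold columnPattern; split_ifs <;> omega
  have hinner : ¬(below.val = 0 ∨ below.val = n - 1) ∨ ¬(above.val = 0 ∨ above.val = n - 1) := by
    simp [below, above]; omega
  rcases hinner with h | h
  · rw [columnPattern_of_interior p q a b c h]; have := hmin above; omega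
  · rw [columnPattern_of_interior p q a b c h]; have := hmin below; omega

variable {k p q a b c}

lemma le_cylinderLabel_add_sum_neighborFinset (hn : 4 ≤ n)
    (hz : k + 3 ≤ p + 2 * q) (hp : k + 3 ≤ 3 * p + q)
    (hzb : k + 3 ≤ p + q + c) (hpb : k + 3 ≤ 2 * p + q + b)
    (h₀ : k + 3 ≤ 2 * a + b + q) (h₂ : k + 3 ≤ a + b + c + p) (h₃ : k + 2 ≤ b + 2 * c)
    (v : Fin 6 × Fin n) :
    k ≤ cylinderLabel n p q a b c v + ∑ u ∈ (cylinder 6 n).neighborFinset v,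
      (cylinderLabel n p q a b c u - 1) := by
  obtain ⟨i, j⟩ := v
  have hcycle : i - 1 ≠ i + 1 := by revert i; decide
  rw [cylinder, SimpleGraph.sum_neighborFinset_boxProd]
  simp only [SimpleGraph.neighborFinset_def (G := SimpleGraph.cycleGraph 6),
    SimpleGraph.cycleGraph_neighborSet, Set.toFinset_insert, Set.toFinset_singleton]
  rw [sum_pair hcycle, sum_congr rfl fun j' hj' => by
    rw [cylinderLabel, ofNat_three_mul_of_adj ((SimpleGraph.mem_neighborFinset _ _ _).1 hj'),
      ← add_assoc]]
  simp only [cylinderLabel, sub_add_eq_add_sub, add_right_comm _ (1 : Fin 6)]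
  set x := i + Fin.ofNat 6 (3 * j.val)
  by_cases hj : j.val = 0 ∨ j.val = n - 1
  · have := le_sum_columnPattern_of_boundary p q a b c hn hj (x + 3)
    rw [columnPattern_of_boundary p q a b c hj] at *
    have := le_excess_boundary_column h₀ h₂ h₃ x
    omega
  · have := le_sum_columnPattern_of_interior p q a b c hn hj (x + 3)
    rw [columnPattern_of_interior p q a b c hj] at *
    have := le_excess_interior_column (a := a) hz hp hzb hpb x
    omega

lemma gammaKR_cylinder_six_le (hn : 4 ≤ n)
    (hpk : p ≤ k + 1) (hqk : q ≤ k + 1) (hak : a ≤ k + 1) (hbk : b ≤ k + 1) (hck : c ≤ k + 1)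
    (hz : k + 3 ≤ p + 2 * q) (hp : k + 3 ≤ 3 * p + q)
    (hzb : k + 3 ≤ p + q + c) (hpb : k + 3 ≤ 2 * p + q + b)
    (h₀ : k + 3 ≤ 2 * a + b + q) (h₂ : k + 3 ≤ a + b + c + p) (h₃ : k + 2 ≤ b + 2 * c) :
    gammaKR k (cylinder 6 n) ≤ 2 * (2 * (a + b + c)) + (n - 2) * (2 * (p + q)) := by
  rw [← sum_cylinderLabel p q a b c (by omega)]
  refine SimpleGraph.gammaKR_le_sum _ _ (SimpleGraph.isKRDF_of_le_add_sum_pred _ _ (fun v => ?_)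
    (le_cylinderLabel_add_sum_neighborFinset hn hz hp hzb hpb h₀ h₂ h₃))
  unfold cylinderLabel columnPattern
  split_ifs
  · exact sixPattern_le hak hbk hck _
  · exact sixPattern_le (Nat.zero_le _) hpk hqk _

end Cylinder

lemma exists_boundary_labels {k p q : ℕ} (hp : p = (k + 5) ⌈/⌉ 5)
    (hq : q = min (2 * p - 1) (k + 1)) :
    ∃ a b c, a ≤ k + 1 ∧ b ≤ k + 1 ∧ c ≤ k + 1 ∧
      k + 3 ≤ p + q + c ∧ k + 3 ≤ 2 * p + q + b ∧
      k + 3 ≤ 2 * a + b + q ∧ k + 3 ≤ a + b + c + p ∧ k + 2 ≤ b + 2 * c ∧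
      a + b + c ≤ 3 * ((k + 3 - p) ⌈/⌉ 3) := by
  rw [Nat.ceilDiv_eq_add_pred_div] at hp ⊢
  subst hq
  by_cases h : 4 * p ≤ k + 4
  · refine ⟨k + 5 - 4 * p, 6 * p - (k + 6), k + 4 - 3 * p, ?_⟩
    omega
  · have : 2 * p ≤ k + 3 := by omega
    refine ⟨1, k + 2 - 2 * p, p, ?_⟩
    omega

theorem stmt10_general (k n : ℕ) (hn : 4 ≤ n) :
    gammaKR k (cylinder 6 n) ≤
      6 * (n - 2) * ((k + 5) ⌈/⌉ 5) + 12 * ((k + 3 - ((k + 5) ⌈/⌉ 5)) ⌈/⌉ 3) - 2 * (n ⌈/⌉ 2) := by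
  set p := (k + 5) ⌈/⌉ 5 with hp
  set q := min (2 * p - 1) (k + 1) with hq
  have hp' : p = (k + 9) / 5 := by rw [hp, Nat.ceilDiv_eq_add_pred_div]; omega
  obtain ⟨a, b, c, hak, hbk, hck, hzb, hpb, h₀, h₂, h₃, hend⟩ := exists_boundary_labels hp hq
  have hinner : (n - 2) * (2 * (p + q)) + (n - 2) * 2 ≤ 6 * (n - 2) * p := by
    rw [← Nat.mul_add, mul_comm 6, mul_assoc]
    exact Nat.mul_le_mul_left _ (by omega)
  have hhalf : n ⌈/⌉ 2 ≤ n - 2 := by rw [Nat.ceilDiv_eq_add_pred_div]; omega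
  calc gammaKR k (cylinder 6 n) ≤ 2 * (2 * (a + b + c)) + (n - 2) * (2 * (p + q)) :=
        gammaKR_cylinder_six_le hn (by omega) (by omega) hak hbk hck (by omega) (by omega)
          hzb hpb h₀ h₂ h₃
    _ ≤ _ := by omega

theorem stmt10 (k n : ℕ) (hk : 1 ≤ k) (hn : 4 ≤ n) :
    gammaKR k (cylinder 6 n) ≤
      6 * (n - 2) * ((k + 5) ⌈/⌉ 5) + 12 * ((k + 3 - ((k + 5) ⌈/⌉ 5)) ⌈/⌉ 3) - 2 * (n ⌈/⌉ 2) :=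
  stmt10_general k n hn
end
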